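/- arXiv:2106.16130 — 4 statements merged into one kernel-verified Lean document; each statement's English description precedes it below -/
import Mathlib

section
/- Let G be a connected trivially perfect graph with m edges. Then the diameter of the graph associahedron of G satisfies m ≤ δ(A(G)) ≤ 2m; in particular δ(A(G)) = Θ(m). -/
open SimpleGraph

/-- A search tree (elimination tree) on a graph `G`, encoded by its ancestor
relation: `anc u v` means that `u` is an ancestor of `v` (possibly `u = v`).
Equivalently (for connected `G`): the root is a vertex `r`, joined to the roots
of search trees on each connected component of `G - r`. -/
structure SearchTree {V : Type} (G : SimpleGraph V) : Type where
  anc : V → V → Prop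
  refl : ∀ v, anc v v
  antisymm : ∀ u v, anc u v → anc v u → u = v
  trans : ∀ u v w, anc u v → anc v w → anc u w
  chain : ∀ u v w, anc u w → anc v w → anc u v ∨ anc v u
  root : ∃ r, ∀ v, anc r v
  edge_comparable : ∀ u v, G.Adj u v → anc u v ∨ anc v u
  desc_connected : ∀ v, (G.induce {u | anc v u}).Connected

namespace SearchTree

/-- The set of descendants of `v` (including `v`): the vertex set of the
subtree rooted at `v`. -/
def descSet {V : Type} {G : SimpleGraph V} (T : SearchTree G) (v : V) : Set V :=
  {u | T.anc v u}

/-- The height of a search tree: the maximal number of vertices on a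
root-to-leaf path (a single-vertex tree has height 1). -/
noncomputable def height {V : Type} [Fintype V] {G : SimpleGraph V} (T : SearchTree G) : ℕ :=
  Finset.univ.sup fun v => Set.ncard {u | T.anc u v}

end SearchTree

/-- `T'` is obtained from `T` by a rotation at a vertex `b` with parent `a`:
the subtree of `T` rooted at `a` (with vertex set `A`) becomes rooted at `b`,
`a` becomes the root of the component of `G[A] - b` containing `a`, and all
other subtrees are unchanged. The rotation is said to involve `a` and `b`. -/
def IsRotation {V : Type} {G : SimpleGraph V} (T T' : SearchTree G) (a b : V) : Prop :=
  a ≠ b ∧ T.anc a b ∧ T'.descSet b = T.descSet a ∧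
    ∀ v, v ≠ a → v ≠ b → T'.descSet v = T.descSet v

/-- The rotation graph of `G`: vertices are the search trees on `G`, two
trees being adjacent when they differ by a single rotation. It is the skeleton
of the graph associahedron `A(G)`; its diameter is `δ(A(G))`. -/
def rotationGraph {V : Type} (G : SimpleGraph V) : SimpleGraph (SearchTree G) where
  Adj T T' := ∃ a b, IsRotation T T' a b
  symm := by
    constructor
    rintro T T' ⟨a, b, hne, hanc, hb, hoth⟩
    have hanc' : T'.anc b a := by
      have ha : a ∈ T'.descSet b := by rw [hb]; exact T.refl a
      exact ha
    exact ⟨b, a, hne.symm, hanc', hb.symm, fun v h1 h2 => (hoth v h2 h1).symm⟩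
  loopless := by
    constructor
    rintro T ⟨a, b, hne, hanc, hb, hoth⟩
    have h : T.anc b a := by
      have ha : a ∈ T.descSet b := by rw [hb]; exact T.refl a
      exact ha
    exact hne (T.antisymm a b hanc h)

/-- The tree-depth of `G`: the smallest height of a search tree on `G`. -/
noncomputable def treeDepth {V : Type} [Fintype V] (G : SimpleGraph V) : ℕ :=
  sInf {h | ∃ T : SearchTree G, T.height = h}

/-- Adding a universal vertex to a graph. -/
def addUniversal {V : Type} (G : SimpleGraph V) : SimpleGraph (Option V) where
  Adj x y := match x, y with
    | none, none => False
    | none, some _ => True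
    | some _, none => True
    | some a, some b => G.Adj a b
  symm := by
    constructor
    rintro (_ | a) (_ | b) h
    · exact h.elim
    · trivial
    · trivial
    · exact G.adj_symm h
  loopless := by
    constructor
    rintro (_ | a) h
    · exact h
    · exact G.loopless.irrefl a h

/-- Disjoint union of two graphs. -/
def disjUnion {V W : Type} (G : SimpleGraph V) (H : SimpleGraph W) : SimpleGraph (V ⊕ W) where
  Adj x y := match x, y with
    | .inl a, .inl b => G.Adj a b
    | .inr a, .inr b => H.Adj a b
    | _, _ => False
  symm := by
    constructor
    rintro (a | a) (b | b) h
    · exact G.adj_symm h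
    · exact h.elim
    · exact h.elim
    · exact H.adj_symm h
  loopless := by
    constructor
    rintro (a | a) h
    · exact G.loopless.irrefl a h
    · exact H.loopless.irrefl a h

/-- Graphs built recursively from single vertices by adding universal vertices
and taking disjoint unions. -/
inductive TPBuild : {V : Type} → SimpleGraph V → Prop
  | single : TPBuild (⊥ : SimpleGraph PUnit)
  | addUniv {V : Type} {G : SimpleGraph V} : TPBuild G → TPBuild (addUniversal G)
  | union {V W : Type} {G : SimpleGraph V} {H : SimpleGraph W} :
      TPBuild G → TPBuild H → TPBuild (disjUnion G H)

/-- A graph is trivially perfect if it can be built recursively from single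
vertices by repeatedly adding universal vertices and taking disjoint unions. -/
def TriviallyPerfect {V : Type} (G : SimpleGraph V) : Prop :=
  ∃ (W : Type) (H : SimpleGraph W), TPBuild H ∧ Nonempty (G ≃g H)

/-- A graph is chordal if it has no induced cycle of length at least 4. -/
def Chordal {V : Type} (G : SimpleGraph V) : Prop :=
  ∀ n, 4 ≤ n → IsEmpty (cycleGraph n ↪g G)

/-- The treewidth of `G`: one less than the smallest clique number of a chordal
supergraph of `G` on the same vertex set. -/
noncomputable def treewidth {V : Type} (G : SimpleGraph V) : ℕ :=
  sInf {k | ∃ H : SimpleGraph V, G ≤ H ∧ Chordal H ∧ H.cliqueNum = k + 1}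

/-- An interval graph: the intersection graph of closed intervals on the real line. -/
def IsIntervalGraph {V : Type} (G : SimpleGraph V) : Prop :=
  ∃ lo hi : V → ℝ, (∀ v, lo v ≤ hi v) ∧
    ∀ u v, G.Adj u v ↔ u ≠ v ∧ lo u ≤ hi v ∧ lo v ≤ hi u

/-- The pathwidth of `G`: one less than the smallest clique number of an
interval supergraph of `G` on the same vertex set. -/
noncomputable def pathwidth {V : Type} (G : SimpleGraph V) : ℕ :=
  sInf {k | ∃ H : SimpleGraph V, G ≤ H ∧ IsIntervalGraph H ∧ H.cliqueNum = k + 1}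

/-- A vertex is simplicial if its neighborhood induces a clique. -/
def Simplicial {V : Type} (G : SimpleGraph V) (v : V) : Prop :=
  G.IsClique (G.neighborSet v)

/-- A set of vertices is (monophonically) convex if it can be obtained from the
full vertex set by iteratively deleting a simplicial vertex of the current
induced subgraph. -/
inductive MConvex {V : Type} (G : SimpleGraph V) : Set V → Prop
  | univ : MConvex G Set.univ
  | delete {S : Set V} {v : V} (hS : MConvex G S) (hv : v ∈ S)
      (hsimp : Simplicial (G.induce S) ⟨v, hv⟩) : MConvex G (S \ {v})

/-- `P` is the projection of the search tree `T` on the convex set `S`: the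
search tree on `G[S]` obtained from `T` by iteratively deleting the vertices
outside `S`; its ancestor relation is the restriction of that of `T`. -/
def IsProjection {V : Type} {G : SimpleGraph V} (S : Set V) (T : SearchTree G)
    (P : SearchTree (G.induce S)) : Prop :=
  ∀ u v : S, P.anc u v ↔ T.anc (↑u) (↑v)

/-- The complete split graph `SPK p q`: a clique `P` of `p` vertices, an
independent set `Q` of `q` vertices, and all edges between `P` and `Q`. -/
def SPK (p q : ℕ) : SimpleGraph (Fin p ⊕ Fin q) where
  Adj x y := x ≠ y ∧ (x.isLeft ∨ y.isLeft)
  symm := by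
    constructor
    rintro x y ⟨h1, h2⟩
    exact ⟨h1.symm, h2.symm⟩
  loopless := by
    constructor
    rintro x ⟨h, _⟩
    exact h rfl

/-!
A search tree orients every edge of `G` from ancestor to descendant, and a rotation reverses
exactly one edge, so two trees are at least as many rotations apart as there are edges they
orient differently. The greedy trees of a vertex order and of its reverse disagree on all `m`
edges.

A trivially perfect graph has a universal elimination order `f`: every vertex is adjacent to
all vertices it reaches through `f`-larger ones (put a universal vertex first, interleave the
two sides of a disjoint union). Any search tree other than the greedy tree of `f` has a parent
edge oriented against `f`, and rotating it reverses that edge alone. So every tree is within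
`m` rotations of the greedy tree, and any two trees are within `2m`.
-/

section ReachIn

variable {V V' : Type} {G : SimpleGraph V} {G' : SimpleGraph V'}

def ReachIn (G : SimpleGraph V) (S : Set V) (u v : V) : Prop :=
  ∃ p : G.Walk u v, ∀ w ∈ p.support, w ∈ S

namespace ReachIn

variable {S S' : Set V} {u v w : V}

lemma mem_left (h : ReachIn G S u v) : u ∈ S :=
  let ⟨p, hp⟩ := h; hp u p.start_mem_support

lemma mem_right (h : ReachIn G S u v) : v ∈ S :=
  let ⟨p, hp⟩ := h; hp v p.end_mem_support

lemma refl (hu : u ∈ S) : ReachIn G S u u :=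
  ⟨.nil, by simpa using hu⟩

lemma of_adj (h : G.Adj u v) (hu : u ∈ S) (hv : v ∈ S) : ReachIn G S u v :=
  ⟨h.toWalk, by simp [hu, hv]⟩

lemma trans (h₁ : ReachIn G S u v) (h₂ : ReachIn G S v w) : ReachIn G S u w := by
  obtain ⟨p, hp⟩ := h₁
  obtain ⟨q, hq⟩ := h₂
  refine ⟨p.append q, fun x hx => ?_⟩
  rcases (Walk.mem_support_append_iff p q).mp hx with hx | hx
  exacts [hp x hx, hq x hx]

lemma symm (h : ReachIn G S u v) : ReachIn G S v u :=
  let ⟨p, hp⟩ := h; ⟨p.reverse, fun x hx => hp x (by simpa using hx)⟩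

lemma mono (hS : S ⊆ S') (h : ReachIn G S u v) : ReachIn G S' u v :=
  let ⟨p, hp⟩ := h; ⟨p, fun x hx => hS (hp x hx)⟩

lemma reachable (h : ReachIn G S u v) : G.Reachable u v :=
  let ⟨p, _⟩ := h; ⟨p⟩

lemma induction {P : V → Prop} (h : ReachIn G S u v) (hu : P u)
    (hstep : ∀ x y, P x → x ∈ S → y ∈ S → G.Adj x y → P y) : P v := by
  obtain ⟨p, hp⟩ := h
  induction p with
  | nil => exact hu
  | cons hxy p ih =>
      simp only [Walk.support_cons, List.mem_cons] at hp
      exact ih (hstep _ _ hu (hp _ (.inl rfl)) (hp _ (.inr p.start_mem_support)) hxy)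
        (fun w hw => hp w (.inr hw))

lemma reachIn_setOf_reachIn (h : ReachIn G S u v) : ReachIn G {w | ReachIn G S u w} u v := by
  classical
  obtain ⟨p, hp⟩ := h
  exact ⟨p, fun x hx =>
    ⟨p.takeUntil x hx, fun y hy => hp y (p.support_takeUntil_subset_support hx hy)⟩⟩

lemma map (φ : G →g G') {S : Set V'} (h : ReachIn G (φ ⁻¹' S) u v) :
    ReachIn G' S (φ u) (φ v) := by
  obtain ⟨p, hp⟩ := h
  refine ⟨p.map φ, fun x hx => ?_⟩
  rw [Walk.support_map, List.mem_map] at hx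
  obtain ⟨y, hy, rfl⟩ := hx
  exact hp y hy

lemma exists_of_embedding (φ : G ↪g G') {S : Set V'}
    (hS : ∀ x y, y ∈ S → G'.Adj (φ x) y → y ∈ Set.range φ) {a : V} {u : V'}
    (h : ReachIn G' S (φ a) u) : ∃ c, u = φ c ∧ ReachIn G (φ ⁻¹' S) a c := by
  refine h.induction (P := fun y => ∃ c, y = φ c ∧ ReachIn G (φ ⁻¹' S) a c)
    ⟨a, rfl, refl h.mem_left⟩ ?_
  rintro _ y ⟨c, rfl, hc⟩ - hy hcy
  obtain ⟨d, rfl⟩ := hS c y hy hcy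
  exact ⟨d, rfl, hc.trans (of_adj (φ.map_adj_iff.mp hcy) hc.mem_right hy)⟩

end ReachIn

lemma SimpleGraph.Connected.reachIn {S : Set V} (h : (G.induce S).Connected) {u v : V}
    (hu : u ∈ S) (hv : v ∈ S) : ReachIn G S u v := by
  obtain ⟨p⟩ := h.preconnected ⟨u, hu⟩ ⟨v, hv⟩
  exact ReachIn.map (Embedding.induce S).toHom ⟨p, fun w _ => w.2⟩

lemma connected_induce_of_reachIn {S : Set V} {r : V} (hr : r ∈ S)
    (h : ∀ v ∈ S, ReachIn G S r v) : (G.induce S).Connected := by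
  refine (connected_iff_exists_forall_reachable _).mpr ⟨⟨r, hr⟩, fun ⟨v, hv⟩ => ?_⟩
  obtain ⟨p, hp⟩ := h v hv
  exact ⟨p.induce S hp⟩

end ReachIn

namespace SearchTree

variable {V : Type} {G : SimpleGraph V}

lemma ext {T T' : SearchTree G} (h : ∀ u v, T.anc u v ↔ T'.anc u v) : T = T' := by
  obtain ⟨anc, _⟩ := T
  obtain ⟨anc', _⟩ := T'
  obtain rfl : anc = anc' := funext₂ fun u v => propext (h u v)
  rfl

lemma anc_iff_not_anc (T : SearchTree G) {u v : V} (h : G.Adj u v) : T.anc u v ↔ ¬ T.anc v u :=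
  ⟨fun h₁ h₂ => h.ne (T.antisymm u v h₁ h₂), (T.edge_comparable u v h).resolve_right⟩

lemma reachIn_descSet (T : SearchTree G) {u v : V} (h : T.anc u v) : ReachIn G (T.descSet u) u v :=
  (T.desc_connected u).reachIn (T.refl u) h

lemma connected (T : SearchTree G) : G.Connected := by
  obtain ⟨r, hr⟩ := T.root
  exact (connected_iff_exists_forall_reachable G).mpr
    ⟨r, fun v => (T.reachIn_descSet (hr v)).reachable⟩

def IsParent (T : SearchTree G) (a b : V) : Prop :=
  a ≠ b ∧ T.anc a b ∧ ∀ u, T.anc u b → u = b ∨ T.anc u a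

variable {T : SearchTree G}

/-- The parent of `b` is its strict ancestor with the smallest subtree. -/
lemma exists_isParent [Finite V] {b u : V} (hu : T.anc u b) (hne : u ≠ b) :
    ∃ a, T.IsParent a b := by
  obtain ⟨a, ⟨hab, hne'⟩, hmin⟩ := Set.exists_min_image {u | T.anc u b ∧ u ≠ b}
    (fun u => (T.descSet u).ncard) (Set.toFinite _) ⟨u, hu, hne⟩
  refine ⟨a, hne', hab, fun w hw => or_iff_not_imp_left.mpr fun hwb => ?_⟩
  refine (T.chain w a b hw hab).elim id fun haw => ?_
  have hsub : T.descSet w ⊆ T.descSet a := fun x hx => T.trans a w x haw hx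
  have heq := Set.eq_of_subset_of_ncard_le hsub (hmin w ⟨hw, hwb⟩) (Set.toFinite _)
  exact (heq ▸ T.refl a : a ∈ T.descSet w)

/-- Ranking vertices by depth, ties broken by an enumeration. -/
lemma exists_linearExtension [Finite V] (T : SearchTree G) :
    ∃ h : V → ℕ, Function.Injective h ∧ ∀ u v, T.anc u v → h u ≤ h v := by
  let e := Finite.equivFin V
  let n := Nat.card V
  let depth : V → ℕ := fun v => {u | T.anc u v}.ncard
  have hdepth : ∀ u v, T.anc u v → u ≠ v → depth u < depth v := fun u v huv hne =>
    Set.ncard_lt_ncard ⟨fun x hx => T.trans x u v hx huv,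
      fun hsub => hne (T.antisymm u v huv (hsub (T.refl v)))⟩ (Set.toFinite _)
  have hmod : ∀ v, (depth v * n + e v) % n = e v := fun v => by
    rw [Nat.mul_add_mod_self_right, Nat.mod_eq_of_lt (e v).2]
  refine ⟨fun v => depth v * n + e v, fun u v huv => e.injective (Fin.ext ?_),
    fun u v huv => ?_⟩
  · rw [← hmod u, ← hmod v]
    exact congrArg (· % n) huv
  obtain rfl | hne := eq_or_ne u v
  · rfl
  calc depth u * n + e u ≤ (depth u + 1) * n := by rw [add_mul, one_mul]; have := (e u).2; omega
    _ ≤ depth v * n := Nat.mul_le_mul_right n (hdepth u v huv hne)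
    _ ≤ depth v * n + e v := Nat.le_add_right _ _

variable {α : Type*} [LinearOrder α]

/-- The search tree in which every subtree is rooted at the `f`-smallest vertex of its
subgraph. -/
def greedy [Finite V] (hconn : G.Connected) (f : V → α) (hf : Function.Injective f) :
    SearchTree G where
  anc u v := ReachIn G {w | f u ≤ f w} u v
  refl v := .refl le_rfl
  antisymm u v h₁ h₂ := hf (le_antisymm h₁.mem_right h₂.mem_right)
  trans u v w h₁ h₂ := h₁.trans (h₂.mono fun x hx => le_trans h₁.mem_right hx)
  chain u v w h₁ h₂ := by
    rcases le_total (f u) (f v) with h | h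
    · exact .inl (h₁.trans (h₂.mono fun x hx => le_trans h hx).symm)
    · exact .inr (h₂.trans (h₁.mono fun x hx => le_trans h hx).symm)
  root := by
    have := hconn.nonempty
    obtain ⟨r, -, hr⟩ := Set.exists_min_image Set.univ f Set.finite_univ Set.univ_nonempty
    exact ⟨r, fun v => let ⟨p⟩ := hconn r v; ⟨p, fun x _ => hr x trivial⟩⟩
  edge_comparable u v h := by
    rcases le_total (f u) (f v) with huv | huv
    · exact .inl (.of_adj h le_rfl huv)
    · exact .inr (.of_adj h.symm le_rfl huv)
  desc_connected _ :=
    connected_induce_of_reachIn (.refl le_rfl) fun _ hu => hu.reachIn_setOf_reachIn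

variable [Finite V] {hconn : G.Connected} {f : V → α} {hf : Function.Injective f}

lemma greedy_descSet (v : V) :
    (greedy hconn f hf).descSet v = {u | ReachIn G {w | f v ≤ f w} v u} := rfl

lemma greedy_anc_of_adj {u v : V} (h : G.Adj u v) (huv : f u ≤ f v) :
    (greedy hconn f hf).anc u v :=
  .of_adj h le_rfl huv

lemma eq_greedy (T : SearchTree G) (hmono : ∀ u v, T.anc u v → f u ≤ f v) :
    T = greedy hconn f hf := by
  refine ext fun u v => ⟨fun h => (T.reachIn_descSet h).mono fun x => hmono u x, fun h => ?_⟩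
  refine h.induction (T.refl u) fun x y hux _ hy hxy => ?_
  refine (T.edge_comparable x y hxy).elim (T.trans u x y hux) fun hyx => ?_
  refine (T.chain u y x hux hyx).elim id fun hyu => ?_
  obtain rfl := hf (le_antisymm (hmono y u hyu) hy)
  exact T.refl y

end SearchTree

namespace IsRotation

variable {V : Type} {G : SimpleGraph V} {T T' : SearchTree G} {a b : V}

lemma anc_swap (h : IsRotation T T' a b) : T'.anc b a :=
  (h.2.2.1.symm ▸ T.refl a : a ∈ T'.descSet b)

lemma symm (h : IsRotation T T' a b) : IsRotation T' T b a :=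
  ⟨h.1.symm, h.anc_swap, h.2.2.1.symm, fun v hvb hva => (h.2.2.2 v hva hvb).symm⟩

lemma anc_iff {x y : V} (h : IsRotation T T' a b) (hxa : x ≠ a) (hxb : x ≠ b) :
    T.anc x y ↔ T'.anc x y :=
  (Set.ext_iff.mp (h.2.2.2 x hxa hxb) y).symm

lemma anc_iff_of_adj {u v : V} (h : IsRotation T T' a b) (huv : G.Adj u v)
    (hne : s(u, v) ≠ s(a, b)) : T.anc u v ↔ T'.anc u v := by
  by_cases hu : u ≠ a ∧ u ≠ b
  · exact h.anc_iff hu.1 hu.2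
  have hv : v ≠ a ∧ v ≠ b := by
    have := huv.ne
    constructor <;> rintro rfl <;> grind [Sym2.eq_swap]
  rw [T.anc_iff_not_anc huv, T'.anc_iff_not_anc huv, h.anc_iff hv.1 hv.2]

end IsRotation

namespace SearchTree

variable {V : Type} {G : SimpleGraph V} {α : Type*} [LinearOrder α]

lemma isRotation_greedy [Finite V] {hconn : G.Connected} {f f' : V → α}
    {hf : Function.Injective f} {hf' : Function.Injective f'} {a b : V} (hab : a ≠ b)
    (hanc : (greedy hconn f hf).anc a b) (hb : {w | f' b ≤ f' w} = {w | f a ≤ f w})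
    (hv : ∀ v, v ≠ a → v ≠ b → {w | f' v ≤ f' w} = {w | f v ≤ f w}) :
    IsRotation (greedy hconn f hf) (greedy hconn f' hf') a b := by
  refine ⟨hab, hanc, ?_, fun v hva hvb => by simp only [greedy_descSet, hv v hva hvb]⟩
  simp only [greedy_descSet, hb]
  exact Set.ext fun u => ⟨hanc.trans, hanc.symm.trans⟩

/-- In a linear extension where `b` comes right after its parent `a`, move `b` right
before `a`. -/
lemma exists_isRotation [Finite V] (T : SearchTree G) {a b : V} (hpar : T.IsParent a b) :
    ∃ T', IsRotation T T' a b := by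
  classical
  obtain ⟨hab, hanc, hup⟩ := hpar
  obtain ⟨h, hinj, hmono⟩ := T.exists_linearExtension
  have hne : ∀ {v}, v ≠ a → (h v : ℤ) ≠ h a := fun hva => by exact_mod_cast hinj.ne hva
  let g : ℤ → V → ℤ := fun ε v => if v = b then 2 * h a + ε else 2 * h v
  have hg : ∀ ε, Odd ε → Function.Injective (g ε) := by
    rintro ε ⟨k, rfl⟩ u v huv
    simp only [g] at huv
    split_ifs at huv with hu hv hv
    · exact hu.trans hv.symm
    · omega
    · omega
    · exact hinj (by omega)
  have hT : T = greedy T.connected (g 1) (hg 1 odd_one) := by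
    refine T.eq_greedy fun u v huv => ?_
    simp only [g]
    split_ifs with hu hv hv
    · rfl
    · rw [hu] at huv
      have := hne (v := v) fun hva => hab (T.antisymm a b hanc (hva ▸ huv))
      have := hmono a v (T.trans a b v hanc huv)
      omega
    · have := hmono u a ((hup u (hv ▸ huv)).resolve_left hu)
      omega
    · have := hmono u v huv
      omega
  refine ⟨greedy T.connected (g (-1)) (hg (-1) (by decide)), ?_⟩
  rw [hT] at hanc ⊢
  refine isRotation_greedy hab hanc ?_ fun v hva hvb => ?_
  · ext w
    simp only [Set.mem_ofPred_eq, g, if_pos rfl, if_neg hab]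
    split_ifs <;> omega
  · ext w
    have := hne hva
    simp only [Set.mem_ofPred_eq, g, if_neg hvb]
    split_ifs <;> omega

def flippedEdges (T T' : SearchTree G) : Set (Sym2 V) :=
  {e | ∃ u v, G.Adj u v ∧ e = s(u, v) ∧ T.anc u v ∧ T'.anc v u}

variable {T T' T₀ : SearchTree G} {a b : V}

lemma flippedEdges_subset_edgeSet : T.flippedEdges T' ⊆ G.edgeSet := by
  rintro _ ⟨u, v, huv, rfl, -⟩
  exact huv

@[simp]
lemma flippedEdges_self : T.flippedEdges T = ∅ :=
  Set.eq_empty_of_forall_notMem fun _ ⟨u, v, huv, _, h, h'⟩ => huv.ne (T.antisymm u v h h')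

lemma flippedEdges_subset_of_isRotation (h : IsRotation T T' a b) :
    T.flippedEdges T₀ ⊆ insert s(a, b) (T'.flippedEdges T₀) := by
  rintro _ ⟨u, v, huv, rfl, hT, hT₀⟩
  by_cases hne : s(u, v) = s(a, b)
  · exact .inl hne
  · exact .inr ⟨u, v, huv, rfl, (h.anc_iff_of_adj huv hne).mp hT, hT₀⟩

lemma flippedEdges_ssubset_of_isRotation (h : IsRotation T T' a b) (hadj : G.Adj a b)
    (h₀ : T₀.anc b a) : T'.flippedEdges T₀ ⊂ T.flippedEdges T₀ := by
  have hmem : s(a, b) ∈ T.flippedEdges T₀ := ⟨a, b, hadj, rfl, h.2.1, h₀⟩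
  have hnot : s(a, b) ∉ T'.flippedEdges T₀ := by
    rintro ⟨u, v, -, huv, hu, hv⟩
    rcases Sym2.eq_iff.mp huv with ⟨rfl, rfl⟩ | ⟨rfl, rfl⟩
    · exact h.1 (T'.antisymm _ _ hu h.anc_swap)
    · exact h.1 (T₀.antisymm _ _ hv h₀)
  refine (Set.ssubset_iff_of_subset fun e he => ?_).mpr ⟨_, hmem, hnot⟩
  refine ((flippedEdges_subset_of_isRotation h.symm he).resolve_left ?_)
  rintro rfl
  exact hnot (Sym2.eq_swap ▸ he)

variable [Finite V]

lemma ncard_flippedEdges_le_length (p : (rotationGraph G).Walk T T') :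
    (T.flippedEdges T').ncard ≤ p.length := by
  induction p with
  | nil => simp
  | @cons T T₁ T' hadj p ih =>
      obtain ⟨a, b, h⟩ := id hadj
      calc (T.flippedEdges T').ncard ≤ (insert s(a, b) (T₁.flippedEdges T')).ncard :=
            Set.ncard_le_ncard (flippedEdges_subset_of_isRotation h) (Set.toFinite _)
        _ ≤ (T₁.flippedEdges T').ncard + 1 := Set.ncard_insert_le _ _
        _ ≤ _ := Nat.succ_le_succ ih

lemma ncard_flippedEdges_le_edist :
    ((T.flippedEdges T').ncard : ℕ∞) ≤ (rotationGraph G).edist T T' :=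
  le_iInf fun p => Nat.cast_le.mpr (ncard_flippedEdges_le_length p)

end SearchTree

open SearchTree

section LowerBound

variable {V : Type} {G : SimpleGraph V}

lemma flippedEdges_greedy_toDual [Finite V] {α : Type*} [LinearOrder α] (hconn : G.Connected)
    {f : V → α} (hf : Function.Injective f) :
    (greedy hconn f hf).flippedEdges (greedy hconn (OrderDual.toDual ∘ f)
      (OrderDual.toDual.injective.comp hf)) = G.edgeSet := by
  refine flippedEdges_subset_edgeSet.antisymm fun e he => ?_
  induction e using Sym2.ind with
  | _ u v =>
    rcases le_total (f u) (f v) with huv | hvu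
    · exact ⟨u, v, he, rfl, greedy_anc_of_adj he huv, greedy_anc_of_adj (G.adj_symm he) huv⟩
    · exact ⟨v, u, G.adj_symm he, Sym2.eq_swap, greedy_anc_of_adj (G.adj_symm he) hvu,
        greedy_anc_of_adj he hvu⟩

theorem le_ediam_rotationGraph [Finite V] (hconn : G.Connected) :
    (G.edgeSet.ncard : ℕ∞) ≤ (rotationGraph G).ediam := by
  obtain ⟨f, hf⟩ : ∃ f : V → Fin (Nat.card V), Function.Injective f :=
    ⟨_, (Finite.equivFin V).injective⟩
  calc (G.edgeSet.ncard : ℕ∞)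
      = ((greedy hconn f hf).flippedEdges (greedy hconn (OrderDual.toDual ∘ f)
          (OrderDual.toDual.injective.comp hf))).ncard := by
        rw [flippedEdges_greedy_toDual]
    _ ≤ _ := ncard_flippedEdges_le_edist
    _ ≤ _ := SimpleGraph.edist_le_ediam

end LowerBound

section UniversalEliminationOrder

variable {V : Type} {G : SimpleGraph V}

/-- A universal elimination order. -/
def IsUEO {α : Type*} [LinearOrder α] (G : SimpleGraph V) (f : V → α) : Prop :=
  Function.Injective f ∧ ∀ v u, ReachIn G {w | f v ≤ f w} v u → u ≠ v → G.Adj v u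

namespace IsUEO

variable {W : Type} {H : SimpleGraph W}

lemma comap {α : Type*} [LinearOrder α] {f : W → α} (hf : IsUEO H f) (φ : G ↪g H) :
    IsUEO G (f ∘ φ) :=
  ⟨hf.1.comp φ.injective, fun v u h hne =>
    φ.map_adj_iff.mp (hf.2 (φ v) (φ u) (ReachIn.map φ.toHom (S := {w | f (φ v) ≤ f w}) h)
      (φ.injective.ne hne))⟩

lemma of_subsingleton [Subsingleton V] {α : Type*} [LinearOrder α] (f : V → α) : IsUEO G f :=
  ⟨Function.injective_of_subsingleton f, fun v u _ hne => (hne (Subsingleton.elim u v)).elim⟩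

lemma addUniversal {f : V → ℕ} (hf : IsUEO G f) :
    IsUEO (addUniversal G) (fun o => o.elim 0 (f · + 1)) := by
  refine ⟨?_, ?_⟩
  · rintro (_ | x) (_ | y) hxy <;> simp only [Option.elim] at hxy
    · rfl
    · omega
    · omega
    · exact congrArg some (hf.1 (by omega))
  rintro (_ | a) u h hne
  · cases u
    exacts [(hne rfl).elim, trivial]
  let φ : G ↪g _root_.addUniversal G := ⟨⟨some, Option.some_injective V⟩, Iff.rfl⟩
  obtain ⟨c, rfl, hc⟩ := h.exists_of_embedding φ (S := {w | f a + 1 ≤ w.elim 0 (f · + 1)})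
    fun x y hy _ => by cases y; exacts [(Nat.not_succ_le_zero _ hy).elim, ⟨_, rfl⟩]
  exact hf.2 a c (hc.mono fun w hw => Nat.le_of_succ_le_succ hw) fun hca => hne (hca ▸ rfl)

lemma disjUnion {f : V → ℕ} {g : W → ℕ} (hf : IsUEO G f) (hg : IsUEO H g) :
    IsUEO (disjUnion G H) (Sum.elim (2 * f ·) (2 * g · + 1)) := by
  refine ⟨?_, ?_⟩
  · rintro (x | x) (y | y) hxy <;> simp only [Sum.elim_inl, Sum.elim_inr] at hxy
    · exact congrArg Sum.inl (hf.1 (by omega))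
    · omega
    · omega
    · exact congrArg Sum.inr (hg.1 (by omega))
  rintro (a | a) u h hne
  · let φ : G ↪g _root_.disjUnion G H := ⟨⟨Sum.inl, Sum.inl_injective⟩, Iff.rfl⟩
    obtain ⟨c, rfl, hc⟩ := h.exists_of_embedding φ fun x y _ hxy => by
      cases y; exacts [⟨_, rfl⟩, hxy.elim]
    exact hf.2 a c (hc.mono fun w (hw : 2 * f a ≤ 2 * f w) => show f a ≤ f w by omega)
      fun hca => hne (hca ▸ rfl)
  · let φ : H ↪g _root_.disjUnion G H := ⟨⟨Sum.inr, Sum.inr_injective⟩, Iff.rfl⟩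
    obtain ⟨c, rfl, hc⟩ := h.exists_of_embedding φ fun x y _ hxy => by
      cases y; exacts [hxy.elim, ⟨_, rfl⟩]
    exact hg.2 a c (hc.mono fun w (hw : 2 * g a + 1 ≤ 2 * g w + 1) => show g a ≤ g w by omega)
      fun hca => hne (hca ▸ rfl)

end IsUEO

lemma TPBuild.exists_isUEO {W : Type} {H : SimpleGraph W} (h : TPBuild H) :
    ∃ f : W → ℕ, IsUEO H f := by
  induction h with
  | single => exact ⟨fun _ => 0, .of_subsingleton _⟩
  | addUniv _ ih =>
      obtain ⟨f, hf⟩ := ih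
      exact ⟨_, hf.addUniversal⟩
  | union _ _ ihG ihH =>
      obtain ⟨f, hf⟩ := ihG
      obtain ⟨g, hg⟩ := ihH
      exact ⟨_, hf.disjUnion hg⟩

lemma TriviallyPerfect.exists_isUEO (h : TriviallyPerfect G) : ∃ f : V → ℕ, IsUEO G f := by
  obtain ⟨W, H, hH, ⟨e⟩⟩ := h
  obtain ⟨f, hf⟩ := hH.exists_isUEO
  exact ⟨_, hf.comap e.toEmbedding⟩

namespace IsUEO

variable [Finite V] {α : Type*} [LinearOrder α] {f : V → α}

/-- For `b` the `f`-smallest vertex below an `f`-larger ancestor, the subtree of its parent `a`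
lies `f`-above `b`, so `a` and `b` are adjacent. -/
lemma exists_isParent_adj (hconn : G.Connected) (hf : IsUEO G f) {T : SearchTree G}
    (hT : T ≠ greedy hconn f hf.1) :
    ∃ a b, T.IsParent a b ∧ G.Adj a b ∧ f b < f a := by
  have hbad : {v | ∃ u, T.anc u v ∧ f v < f u}.Nonempty := by
    by_contra! h
    refine hT (T.eq_greedy fun u v huv => not_lt.mp fun hlt => ?_)
    exact h.subset ⟨u, huv, hlt⟩
  obtain ⟨b, ⟨u, hub, hbu⟩, hmin⟩ := Set.exists_min_image _ f (Set.toFinite _) hbad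
  have hne : u ≠ b := fun h => (h ▸ hbu).false
  obtain ⟨a, hpar⟩ := T.exists_isParent hub hne
  have hba : f b < f a := by
    by_contra! hab
    have hua : T.anc u a := (hpar.2.2 u hub).resolve_left hne
    exact hpar.1 (hf.1 (le_antisymm hab (hmin a ⟨u, hua, hab.trans_lt hbu⟩)))
  have hsub : T.descSet a ⊆ {w | f b ≤ f w} := fun x hx =>
    not_lt.mp fun hxb => (hmin x ⟨a, hx, hxb.trans hba⟩).not_gt hxb
  have hadj := hf.2 b a ((T.reachIn_descSet hpar.2.1).mono hsub).symm hpar.1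
  exact ⟨a, b, hpar, hadj.symm, hba⟩

lemma edist_greedy_le (hconn : G.Connected) (hf : IsUEO G f) (T : SearchTree G) :
    (rotationGraph G).edist T (greedy hconn f hf.1) ≤
      (T.flippedEdges (greedy hconn f hf.1)).ncard := by
  generalize hn : (T.flippedEdges (greedy hconn f hf.1)).ncard = n
  induction n using Nat.strong_induction_on generalizing T with
  | _ n ih =>
  obtain rfl | hT := eq_or_ne T (greedy hconn f hf.1)
  · simp
  obtain ⟨a, b, hpar, hadj, hba⟩ := hf.exists_isParent_adj hconn hT
  obtain ⟨T', hrot⟩ := T.exists_isRotation hpar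
  have hlt : (T'.flippedEdges (greedy hconn f hf.1)).ncard < n :=
    hn ▸ Set.ncard_lt_ncard (flippedEdges_ssubset_of_isRotation hrot hadj
      (greedy_anc_of_adj hadj.symm hba.le)) (Set.toFinite _)
  calc (rotationGraph G).edist T (greedy hconn f hf.1)
      ≤ (rotationGraph G).edist T T' + (rotationGraph G).edist T' (greedy hconn f hf.1) :=
        SimpleGraph.edist_triangle
    _ ≤ 1 + (T'.flippedEdges (greedy hconn f hf.1)).ncard :=
        add_le_add (SimpleGraph.edist_le_one_iff_adj_or_eq.mpr (.inl ⟨a, b, hrot⟩))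
          (ih _ hlt T' rfl)
    _ ≤ n := by norm_cast; omega

theorem ediam_rotationGraph_le (hconn : G.Connected) (hf : IsUEO G f) :
    (rotationGraph G).ediam ≤ 2 * G.edgeSet.ncard := by
  have hle : ∀ T, (rotationGraph G).edist T (greedy hconn f hf.1) ≤ G.edgeSet.ncard := fun T =>
    (hf.edist_greedy_le hconn T).trans
      (Nat.cast_le.mpr (Set.ncard_le_ncard flippedEdges_subset_edgeSet (Set.toFinite _)))
  refine SimpleGraph.ediam_le_iff.mpr fun T T' => ?_
  calc (rotationGraph G).edist T T'
      ≤ (rotationGraph G).edist T (greedy hconn f hf.1) +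
          (rotationGraph G).edist (greedy hconn f hf.1) T' := SimpleGraph.edist_triangle
    _ ≤ G.edgeSet.ncard + G.edgeSet.ncard :=
        add_le_add (hle T) (SimpleGraph.edist_comm ▸ hle T')
    _ = 2 * G.edgeSet.ncard := (two_mul _).symm

end IsUEO

end UniversalEliminationOrder

/-- Let `G` be a connected trivially perfect graph with `m` edges.
Then `m ≤ δ(A(G)) ≤ 2m` (in particular, `δ(A(G)) = Θ(m)`). -/
theorem diam_assoc_trivially_perfect {V : Type} [Fintype V] (G : SimpleGraph V)
    (hconn : G.Connected) (htp : TriviallyPerfect G) (m : ℕ)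
    (hm : G.edgeSet.ncard = m) :
    (m : ℕ∞) ≤ (rotationGraph G).ediam ∧
      (rotationGraph G).ediam ≤ ((2 * m : ℕ) : ℕ∞) := by
  subst hm
  obtain ⟨f, hf⟩ := htp.exists_isUEO
  exact ⟨le_ediam_rotationGraph hconn, by exact_mod_cast hf.ediam_rotationGraph_le hconn⟩
end

section
/- For any two positive integers k and n such that k divides n, there exists a connected trivially perfect graph G on n+1 vertices such that the tree-depth of G equals n/k + 1 and δ(A(G)) ≥ (n/k + 1)·n/2. One such graph consists of k cliques C_1,…,C_k, each of size n/k + 1, such that a single designated vertex v is the unique common vertex of any two distinct cliques C_i and C_j. -/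
open SimpleGraph

/-!
The witness is the windmill graph: `k` cliques `K_{m+1}` (`m = n / k`) sharing one hub vertex.
Its tree-depth is `m + 1`: a clique of size `m + 1` lies on a root-to-leaf path of every search
tree, and the tree rooted at the hub in which every blade hangs as a chain has exactly that height.

For the diameter, a rotation at `(a, b)` changes the ancestor relation between the endpoints of
no edge other than `ab`, so the rotation distance between two search trees is at least the number
of edges they orient in opposite ways. The chain tree above and the path listing the blades one
after another, each reversed, with the hub at the bottom, orient all `k m (m + 1) / 2` edges
oppositely.
-/

namespace SimpleGraph

variable {V : Type} {G : SimpleGraph V}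

lemma induce_connected_of_forall_adj {S : Set V} {c : V} (hc : c ∈ S)
    (hadj : ∀ x ∈ S, x ≠ c → G.Adj c x) : (G.induce S).Connected := by
  have hreach : ∀ x : S, (G.induce S).Reachable ⟨c, hc⟩ x := by
    rintro ⟨x, hx⟩
    obtain rfl | hxc := eq_or_ne x c
    · rfl
    · exact Adj.reachable (hadj x hx hxc)
  exact (connected_iff _).2 ⟨fun x y => (hreach x).symm.trans (hreach y), ⟨⟨c, hc⟩⟩⟩

end SimpleGraph

section AddUniversal

variable {V : Type} (G : SimpleGraph V)

lemma addUniversal_top : addUniversal (⊤ : SimpleGraph V) = ⊤ := by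
  ext x y
  cases x <;> cases y <;> simp [addUniversal]

lemma degree_addUniversal_none [Fintype V] [Fintype ((addUniversal G).neighborSet none)] :
    (addUniversal G).degree none = Fintype.card V := by
  have : (addUniversal G).neighborFinset none = Finset.univ.map .some := by
    ext (_ | v) <;> simp only [mem_neighborFinset] <;> simp [addUniversal]
  rw [← card_neighborFinset_eq_degree, this, Finset.card_map, Finset.card_univ]

lemma degree_addUniversal_some (v : V) [Fintype (G.neighborSet v)]
    [Fintype ((addUniversal G).neighborSet (some v))] :
    (addUniversal G).degree (some v) = G.degree v + 1 := by
  have : (addUniversal G).neighborFinset (some v) =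
      .cons none ((G.neighborFinset v).map .some) (by simp) := by
    ext (_ | w) <;> simp only [mem_neighborFinset] <;> simp [addUniversal]
  rw [← card_neighborFinset_eq_degree, this, Finset.card_cons,
    Finset.card_map, card_neighborFinset_eq_degree]

end AddUniversal

namespace TriviallyPerfect

variable {V W : Type}

lemma of_iso {G : SimpleGraph V} {H : SimpleGraph W} (e : G ≃g H) (h : TriviallyPerfect H) :
    TriviallyPerfect G := by
  obtain ⟨U, K, hK, ⟨e'⟩⟩ := h
  exact ⟨U, K, hK, ⟨e.trans e'⟩⟩

lemma of_unique [Unique V] (G : SimpleGraph V) : TriviallyPerfect G :=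
  ⟨PUnit, ⊥, .single, ⟨⟨Equiv.ofUnique V PUnit, fun {a b} => by
    simp [Subsingleton.elim a b]⟩⟩⟩

lemma addUniversal {G : SimpleGraph V} (h : TriviallyPerfect G) :
    TriviallyPerfect (addUniversal G) := by
  obtain ⟨U, K, hK, ⟨e⟩⟩ := h
  refine ⟨Option U, _root_.addUniversal K, .addUniv hK,
    ⟨⟨Equiv.optionCongr e.toEquiv, ?_⟩⟩⟩
  rintro (_ | a) (_ | b) <;> simp [_root_.addUniversal, Iso.map_adj_iff]

lemma disjUnion {G : SimpleGraph V} {H : SimpleGraph W} (hG : TriviallyPerfect G)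
    (hH : TriviallyPerfect H) : TriviallyPerfect (disjUnion G H) := by
  obtain ⟨U, K, hK, ⟨e⟩⟩ := hG
  obtain ⟨U', K', hK', ⟨e'⟩⟩ := hH
  refine ⟨U ⊕ U', _root_.disjUnion K K', .union hK hK',
    ⟨⟨Equiv.sumCongr e.toEquiv e'.toEquiv, ?_⟩⟩⟩
  rintro (a | a) (b | b) <;> simp [_root_.disjUnion, Iso.map_adj_iff]

lemma bot_boxProd {H : SimpleGraph W} (hH : TriviallyPerfect H)
    (ι : Type) [Finite ι] [Nonempty ι] :
    TriviallyPerfect ((⊥ : SimpleGraph ι) □ H) := by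
  refine Finite.induction_empty_option
    (P := fun ι => Nonempty ι → TriviallyPerfect ((⊥ : SimpleGraph ι) □ H))
    (fun e h hβ => ?_) (fun h => (IsEmpty.false h.some).elim) (fun {α} _ h _ => ?_) ι ‹_›
  · exact .of_iso ⟨e.symm.prodCongr (Equiv.refl W), by simp [boxProd_adj]⟩
      (h (e.nonempty_congr.2 hβ))
  · cases isEmpty_or_nonempty α
    · exact .of_iso ⟨Equiv.uniqueProd W (Option α), fun {p q} => by
        simp [boxProd_adj, Subsingleton.elim p.1 q.1]⟩ hH
    · refine .of_iso ⟨optionProdEquiv, ?_⟩ (hH.disjUnion (h ‹_›))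
      rintro ⟨_ | a, v⟩ ⟨_ | b, w⟩ <;> simp [boxProd_adj, _root_.disjUnion]

end TriviallyPerfect

lemma triviallyPerfect_top (W : Type) [Finite W] [Nonempty W] :
    TriviallyPerfect (⊤ : SimpleGraph W) := by
  refine Finite.induction_empty_option
    (P := fun W => Nonempty W → TriviallyPerfect (⊤ : SimpleGraph W))
    (fun e h hβ => ?_) (fun h => (IsEmpty.false h.some).elim) (fun {α} _ h _ => ?_) W ‹_›
  · exact .of_iso (Iso.completeGraph e.symm) (h (e.nonempty_congr.2 hβ))
  · cases isEmpty_or_nonempty α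
    · exact .of_unique _
    · rw [← addUniversal_top]
      exact (h ‹_›).addUniversal

namespace SearchTree

variable {V : Type} {G : SimpleGraph V}

lemma ncard_le_height_of_isClique [Fintype V] (T : SearchTree G) {s : Set V}
    (hs : G.IsClique s) : s.ncard ≤ T.height := by
  obtain rfl | hne := s.eq_empty_or_nonempty
  · simp
  -- A clique is a chain of `T`; its member with the largest ancestor set lies below all others.
  obtain ⟨w, hw, hmax⟩ := s.toFinite.exists_maximalFor (fun v => {u | T.anc u v}) s hne
  have hsub : s ⊆ {u | T.anc u w} := by
    intro x hx
    obtain rfl | hxw := eq_or_ne x w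
    · exact T.refl x
    rcases T.edge_comparable x w (hs hx hw hxw) with h | h
    · exact h
    · exact hmax hx (fun u hu => T.trans u w x hu h) (T.refl x)
  calc s.ncard ≤ {u | T.anc u w}.ncard := Set.ncard_le_ncard hsub
    _ ≤ T.height := Finset.le_sup (f := fun v => Set.ncard {u | T.anc u v}) (Finset.mem_univ w)

def ofRank {α : Type} [LinearOrder α] (f : V → α) (hf : Function.Injective f)
    (hroot : ∃ r, ∀ v, f r ≤ f v) (hconn : ∀ v, (G.induce {u | f v ≤ f u}).Connected) :
    SearchTree G where
  anc u v := f u ≤ f v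
  refl _ := le_rfl
  antisymm _ _ h h' := hf (le_antisymm h h')
  trans _ _ _ := le_trans
  chain u v _ _ _ := le_total (f u) (f v)
  root := hroot
  edge_comparable u v _ := le_total (f u) (f v)
  desc_connected := hconn

end SearchTree

lemma treeDepth_eq_ncard_of_isClique {V : Type} [Fintype V] {G : SimpleGraph V} {s : Set V}
    (hs : G.IsClique s) (T : SearchTree G) (hT : T.height ≤ s.ncard) :
    treeDepth G = s.ncard := by
  have hT_mem : T.height ∈ {h | ∃ T : SearchTree G, T.height = h} := ⟨T, rfl⟩
  refine le_antisymm ((Nat.sInf_le hT_mem).trans hT) (le_csInf ⟨_, hT_mem⟩ ?_)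
  rintro _ ⟨T', rfl⟩
  exact T'.ncard_le_height_of_isClique hs

namespace IsRotation

variable {V : Type} {G : SimpleGraph V} {T T' : SearchTree G} {a b : V}

lemma anc_iff_of_adj_s4 (hrot : IsRotation T T' a b) {x y : V} (hxy : G.Adj x y)
    (hab : (x, y) ≠ (a, b)) (hba : (x, y) ≠ (b, a)) : T'.anc x y ↔ T.anc x y := by
  obtain ⟨-, hTab, hb, hothers⟩ := hrot
  have hT'b : ∀ u, T'.anc b u ↔ T.anc a u := fun u => Set.ext_iff.1 hb u
  have hsame : ∀ v, v ≠ a → v ≠ b → ∀ u, T'.anc v u ↔ T.anc v u :=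
    fun v hva hvb u => Set.ext_iff.1 (hothers v hva hvb) u
  have hT'ba : T'.anc b a := (hT'b a).2 (T.refl a)
  have hx : x ≠ y := hxy.ne
  by_cases hxa : x = a
  · subst hxa
    have hyb : y ≠ b := fun h => hab (by rw [h])
    have hya : y ≠ x := hx.symm
    refine ⟨fun h => (hT'b y).1 (T'.trans b x y hT'ba h), fun h => ?_⟩
    rcases T'.edge_comparable x y hxy with h' | h'
    · exact h'
    · exact absurd (T.antisymm x y h ((hsame y hya hyb x).1 h')) hx
  by_cases hxb : x = b
  · subst hxb
    have hya : y ≠ a := fun h => hba (by rw [h])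
    have hyx : y ≠ x := hx.symm
    refine ⟨fun h => ?_, fun h => (hT'b y).2 (T.trans a x y hTab h)⟩
    rcases T.edge_comparable x y hxy with h' | h'
    · exact h'
    · exact absurd (T'.antisymm x y h ((hsame y hya hyx x).2 h')) hx
  exact hsame x hxa hxb y

end IsRotation

namespace SearchTree

variable {V : Type} {G : SimpleGraph V}

def inversions (T₀ T : SearchTree G) : Set (V × V) :=
  {p | G.Adj p.1 p.2 ∧ T.anc p.1 p.2 ∧ T₀.anc p.2 p.1}

lemma inversions_self (T : SearchTree G) : T.inversions T = ∅ :=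
  Set.eq_empty_of_forall_notMem fun _ ⟨hp, h, h'⟩ => hp.ne (T.antisymm _ _ h h')

lemma inversions_subset_insert_of_isRotation {T₀ T T' : SearchTree G} {a b : V}
    (hrot : IsRotation T T' a b) : T₀.inversions T ⊆ insert (a, b) (T₀.inversions T') := by
  rintro ⟨x, y⟩ ⟨hxy, h, h₀⟩
  by_cases hab : (x, y) = (a, b)
  · exact Or.inl hab
  have hba : (x, y) ≠ (b, a) := by
    intro hba
    simp only [Prod.mk.injEq] at hba
    obtain ⟨rfl, rfl⟩ := hba
    exact hrot.1 (T.antisymm _ _ hrot.2.1 h)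
  exact Or.inr ⟨hxy, (hrot.anc_iff_of_adj_s4 hxy hab hba).2 h, h₀⟩

lemma ncard_inversions_le_of_walk [Finite V] (T₀ : SearchTree G) {T T' : SearchTree G}
    (w : (rotationGraph G).Walk T T') :
    (T₀.inversions T).ncard ≤ (T₀.inversions T').ncard + w.length := by
  induction w with
  | nil => simp
  | @cons T T'' T' hadj w ih =>
    have hstep : (T₀.inversions T).ncard ≤ (T₀.inversions T'').ncard + 1 := by
      obtain ⟨a, b, hrot⟩ := hadj
      exact (Set.ncard_le_ncard (inversions_subset_insert_of_isRotation hrot)).trans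
        (Set.ncard_insert_le _ _)
    rw [Walk.length_cons]
    omega

lemma ncard_inversions_le_edist [Finite V] (T₀ T : SearchTree G) :
    ((T₀.inversions T).ncard : ℕ∞) ≤ (rotationGraph G).edist T T₀ := by
  by_cases hreach : (rotationGraph G).Reachable T T₀
  · obtain ⟨w, hw⟩ := hreach.exists_walk_length_eq_edist
    have := ncard_inversions_le_of_walk T₀ w
    rw [inversions_self, Set.ncard_empty, zero_add] at this
    rw [← hw]
    exact_mod_cast this
  · rw [SimpleGraph.edist_eq_top_of_not_reachable hreach]
    exact le_top

lemma ncard_edgeSet_le_edist [Finite V] {T₀ T : SearchTree G}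
    (hrev : ∀ x y, G.Adj x y → T.anc x y → T₀.anc y x) :
    (G.edgeSet.ncard : ℕ∞) ≤ (rotationGraph G).edist T T₀ := by
  have hsub : G.edgeSet ⊆ (fun p => s(p.1, p.2)) '' T₀.inversions T := by
    intro e he
    induction e using Sym2.ind with | _ x y => ?_
    rcases T.edge_comparable x y he with h | h
    · exact ⟨(x, y), ⟨he, h, hrev x y he h⟩, rfl⟩
    · exact ⟨(y, x), ⟨he.symm, h, hrev y x he.symm h⟩, Sym2.eq_swap⟩
  calc (G.edgeSet.ncard : ℕ∞) ≤ (T₀.inversions T).ncard := by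
        exact_mod_cast (Set.ncard_le_ncard hsub).trans (Set.ncard_image_le (Set.toFinite _))
    _ ≤ _ := ncard_inversions_le_edist T₀ T

end SearchTree

section Windmill

variable {ι W : Type}

/-- The windmill graph: disjoint cliques `{i} × W` for `i : ι`, joined to a hub vertex `none`. -/
def windmill (ι W : Type) : SimpleGraph (Option (ι × W)) :=
  addUniversal ((⊥ : SimpleGraph ι) □ (⊤ : SimpleGraph W))

def windmillBlade (W : Type) (i : ι) : Set (Option (ι × W)) :=
  Set.range (Option.map (Prod.mk i))

lemma windmill_adj_none (p : ι × W) : (windmill ι W).Adj none (some p) := trivial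

lemma windmill_adj_some {p q : ι × W} :
    (windmill ι W).Adj (some p) (some q) ↔ p.1 = q.1 ∧ p.2 ≠ q.2 := by
  simp [windmill, addUniversal, boxProd_adj, and_comm]

lemma windmill_adj_iff {x y : Option (ι × W)} :
    (windmill ι W).Adj x y ↔
      x ≠ y ∧ ∃ i, x ∈ windmillBlade W i ∧ y ∈ windmillBlade W i := by
  rcases x with _ | ⟨i, a⟩ <;> rcases y with _ | ⟨j, b⟩
  · simp [windmill, addUniversal]
  · simp [windmill_adj_none, windmillBlade]
  · simp [(windmill_adj_none _).symm, windmillBlade]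
  · simp only [windmill_adj_some, windmillBlade]
    simp only [ne_eq, Option.some.injEq, Prod.mk.injEq, not_and, Set.mem_range,
      Option.map_eq_some_iff, exists_eq_right_right, exists_eq_left]
    tauto

lemma windmillBlade_inter_windmillBlade {i j : ι} (hij : i ≠ j) :
    windmillBlade W i ∩ windmillBlade W j = {none} := by
  ext (_ | ⟨l, a⟩)
  · simp [windmillBlade]
  · simp only [windmillBlade, Set.mem_inter_iff, Set.mem_range, Option.map_eq_some_iff,
      Prod.mk.injEq, exists_eq_right_right, exists_eq_left, Set.mem_singleton_iff, reduceCtorEq,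
      iff_false, not_and]
    rintro rfl
    exact hij.symm

lemma iUnion_windmillBlade [Nonempty ι] : ⋃ i : ι, windmillBlade W i = Set.univ := by
  refine Set.eq_univ_of_forall fun x => Set.mem_iUnion.2 ?_
  rcases x with _ | ⟨i, a⟩
  · exact ⟨Classical.arbitrary ι, none, rfl⟩
  · exact ⟨i, some a, rfl⟩

lemma ncard_windmillBlade [Finite W] (i : ι) : (windmillBlade W i).ncard = Nat.card W + 1 := by
  rw [windmillBlade,
    Set.ncard_range_of_injective (Option.map_injective (Prod.mk_right_injective i)),
    Finite.card_option]

lemma isClique_windmillBlade (i : ι) : (windmill ι W).IsClique (windmillBlade W i) :=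
  fun _ hx _ hy hxy => windmill_adj_iff.2 ⟨hxy, i, hx, hy⟩

lemma windmill_connected : (windmill ι W).Connected := by
  refine (induceUnivIso _).connected_iff.1 <|
    induce_connected_of_forall_adj (Set.mem_univ none) fun x _ hx => ?_
  obtain ⟨p, rfl⟩ := Option.ne_none_iff_exists'.1 hx
  exact windmill_adj_none p

lemma triviallyPerfect_windmill [Finite ι] [Finite W] : TriviallyPerfect (windmill ι W) := by
  rcases isEmpty_or_nonempty (ι × W) with _ | ⟨i, w⟩
  · exact .of_unique _
  · have : Nonempty ι := ⟨i⟩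
    have : Nonempty W := ⟨w⟩
    exact ((triviallyPerfect_top W).bot_boxProd ι).addUniversal

lemma two_mul_ncard_edgeSet_windmill [Finite ι] [Finite W] :
    2 * (windmill ι W).edgeSet.ncard = Nat.card ι * Nat.card W * (Nat.card W + 1) := by
  classical
  cases nonempty_fintype ι
  cases nonempty_fintype W
  rw [Set.ncard_eq_toFinset_card', ← edgeFinset, ← sum_degrees_eq_twice_card_edges,
    Fintype.sum_option]
  have hnone : (windmill ι W).degree none = Fintype.card ι * Fintype.card W :=
    (degree_addUniversal_none _).trans (Fintype.card_prod ι W)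
  have hsome (p : ι × W) : (windmill ι W).degree (some p) = Fintype.card W := by
    refine (degree_addUniversal_some _ p).trans ?_
    have : 0 < Fintype.card W := Fintype.card_pos_iff.2 ⟨p.2⟩
    rw [degree_boxProd, bot_degree, complete_graph_degree]
    omega
  simp only [hnone, hsome, Finset.sum_const, Finset.card_univ, Fintype.card_prod, smul_eq_mul,
    Nat.card_eq_fintype_card]
  ring

/-- Lists the blades one after another, each in decreasing order, and the hub last. -/
def windmillRank (x : Option (ι × W)) : WithTop (ι ×ₗ Wᵒᵈ) :=
  x.map fun p => toLex (p.1, OrderDual.toDual p.2)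

lemma windmillRank_injective : Function.Injective (windmillRank (ι := ι) (W := W)) :=
  Option.map_injective fun p q h => by simpa [Prod.ext_iff] using h

section ChainTree

variable [LinearOrder W]

variable (ι W) in
def windmillChainTree : SearchTree (windmill ι W) where
  anc x y := match x, y with
    | none, _ => True
    | some _, none => False
    | some p, some q => p.1 = q.1 ∧ p.2 ≤ q.2
  refl := by rintro (_ | p) <;> simp
  antisymm := by
    rintro (_ | ⟨i, a⟩) (_ | ⟨j, b⟩) <;> simp only [imp_false, forall_const, false_imp_iff,
      reduceCtorEq, not_false_eq_true, Option.some.injEq, Prod.mk.injEq]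
    rintro ⟨rfl, hab⟩ ⟨-, hba⟩
    exact ⟨rfl, le_antisymm hab hba⟩
  trans := by
    rintro (_ | ⟨i, a⟩) (_ | ⟨j, b⟩) (_ | ⟨l, c⟩) <;>
      simp only [imp_false, forall_const, IsEmpty.forall_iff, not_false_eq_true, implies_true]
    rintro ⟨rfl, hab⟩ ⟨rfl, hbc⟩
    exact ⟨rfl, hab.trans hbc⟩
  chain := by
    rintro (_ | ⟨i, a⟩) (_ | ⟨j, b⟩) (_ | ⟨l, c⟩) <;>
      simp only [forall_const, true_or, or_true, IsEmpty.forall_iff, implies_true]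
    rintro ⟨rfl, -⟩ ⟨rfl, -⟩
    simpa using le_total a b
  root := ⟨none, fun _ => trivial⟩
  edge_comparable := by
    rintro (_ | ⟨i, a⟩) (_ | ⟨j, b⟩) h <;> simp only [true_or, or_true]
    obtain ⟨rfl, -⟩ := windmill_adj_some.1 h
    simpa using le_total a b
  desc_connected := by
    rintro (_ | ⟨i, a⟩)
    · exact induce_connected_of_forall_adj (c := none) trivial fun x _ hx => by
        obtain ⟨p, rfl⟩ := Option.ne_none_iff_exists'.1 hx
        exact windmill_adj_none p
    · refine induce_connected_of_forall_adj (c := some (i, a)) ⟨rfl, le_rfl⟩ ?_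
      rintro (_ | ⟨j, b⟩) ⟨hij, -⟩ hne
      exact windmill_adj_some.2 ⟨hij, fun hab => hne (by simp_all)⟩

lemma height_windmillChainTree_le [Fintype ι] [Fintype W] :
    (windmillChainTree ι W).height ≤ Nat.card W + 1 := by
  refine Finset.sup_le fun v _ => ?_
  rcases v with _ | ⟨i, a⟩
  · calc {u | (windmillChainTree ι W).anc u none}.ncard ≤ ({none} : Set _).ncard :=
          Set.ncard_le_ncard (by rintro (_ | u) h; exacts [rfl, h.elim])
      _ ≤ Nat.card W + 1 := by simp
  · calc {u | (windmillChainTree ι W).anc u (some (i, a))}.ncard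
          ≤ (windmillBlade W i).ncard := by
          refine Set.ncard_le_ncard ?_
          rintro (_ | ⟨j, b⟩) h
          · exact ⟨none, rfl⟩
          · obtain ⟨rfl, -⟩ := h
            exact ⟨some b, rfl⟩
      _ = Nat.card W + 1 := ncard_windmillBlade i

end ChainTree

section PathTree

variable [LinearOrder ι] [LinearOrder W]

variable (ι W) in
/-- Every suffix of the order contains the universal hub, so it induces a connected graph. -/
def windmillPathTree [Finite ι] [Finite W] : SearchTree (windmill ι W) :=
  .ofRank windmillRank windmillRank_injective (Finite.exists_min _) fun v =>
    induce_connected_of_forall_adj (c := none) (le_top (a := windmillRank v)) fun x _ hx => by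
      obtain ⟨p, rfl⟩ := Option.ne_none_iff_exists'.1 hx
      exact windmill_adj_none p

lemma windmillPathTree_anc_of_windmillChainTree_anc [Finite ι] [Finite W]
    {x y : Option (ι × W)} (hxy : (windmill ι W).Adj x y)
    (h : (windmillChainTree ι W).anc x y) : (windmillPathTree ι W).anc y x := by
  rcases x with _ | ⟨i, a⟩ <;> rcases y with _ | ⟨j, b⟩
  · exact absurd rfl hxy.ne
  · exact le_top
  · exact h.elim
  · obtain ⟨rfl, hab⟩ := h
    exact WithTop.coe_le_coe.2 (Prod.Lex.toLex_le_toLex.2 (Or.inr ⟨rfl, hab⟩))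

end PathTree

lemma treeDepth_windmill [Fintype ι] [Fintype W] [Nonempty ι] :
    treeDepth (windmill ι W) = Nat.card W + 1 := by
  obtain ⟨_, -⟩ := exists_wellFoundedLT W
  have hs := isClique_windmillBlade (W := W) (Classical.arbitrary ι)
  rw [treeDepth_eq_ncard_of_isClique hs (windmillChainTree ι W)
    (height_windmillChainTree_le.trans_eq (ncard_windmillBlade _).symm), ncard_windmillBlade]

lemma card_mul_card_mul_succ_le_two_mul_ediam [Finite ι] [Finite W] :
    ((Nat.card ι * Nat.card W * (Nat.card W + 1) : ℕ) : ℕ∞) ≤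
      2 * (rotationGraph (windmill ι W)).ediam := by
  obtain ⟨_, -⟩ := exists_wellFoundedLT ι
  obtain ⟨_, -⟩ := exists_wellFoundedLT W
  rw [← two_mul_ncard_edgeSet_windmill, Nat.cast_mul, Nat.cast_ofNat]
  gcongr
  exact (SearchTree.ncard_edgeSet_le_edist fun _ _ =>
    windmillPathTree_anc_of_windmillChainTree_anc).trans edist_le_ediam

end Windmill

theorem treedepth_diam_lower_bound_general (k n : ℕ) (hk : 0 < k) (hdvd : k ∣ n) :
    ∃ (V : Type) (_ : Fintype V) (G : SimpleGraph V) (C : Fin k → Set V) (v : V),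
      Nat.card V = n + 1 ∧
      (∀ i, (C i).ncard = n / k + 1) ∧
      (∀ i j, i ≠ j → C i ∩ C j = {v}) ∧
      (⋃ i, C i) = Set.univ ∧
      (∀ x y, G.Adj x y ↔ x ≠ y ∧ ∃ i, x ∈ C i ∧ y ∈ C i) ∧
      G.Connected ∧ TriviallyPerfect G ∧ treeDepth G = n / k + 1 ∧
      (((n / k + 1) * n : ℕ) : ℕ∞) ≤ 2 * (rotationGraph G).ediam := by
  obtain ⟨m, rfl⟩ := hdvd
  have hm : k * m / k = m := Nat.mul_div_cancel_left m hk
  have : Nonempty (Fin k) := ⟨⟨0, hk⟩⟩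
  refine ⟨Option (Fin k × Fin m), inferInstance, windmill (Fin k) (Fin m), windmillBlade (Fin m),
    none, ?_, fun i => ?_, fun i j => windmillBlade_inter_windmillBlade, iUnion_windmillBlade,
    fun x y => windmill_adj_iff, windmill_connected, triviallyPerfect_windmill, ?_, ?_⟩
  · simp
  · simpa [hm] using ncard_windmillBlade (W := Fin m) i
  · simpa [hm] using treeDepth_windmill (ι := Fin k) (W := Fin m)
  · rw [hm]
    convert card_mul_card_mul_succ_le_two_mul_ediam (ι := Fin k) (W := Fin m) using 2
    simp only [Nat.card_eq_fintype_card, Fintype.card_fin]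
    ring

/-- For any positive integers `k` and `n` such that `k` divides `n`,
there exists a connected trivially perfect graph `G` on `n + 1` vertices with
tree-depth `n / k + 1` and `δ(A(G)) ≥ (n / k + 1) * n / 2` (stated below as
`(n / k + 1) * n ≤ 2 * δ(A(G))`). One such graph consists of `k` cliques
`C 0, …, C (k-1)`, each of size `n / k + 1`, such that a single designated vertex
`v` is the unique common vertex of any two distinct cliques. -/
theorem treedepth_diam_lower_bound (k n : ℕ) (hk : 0 < k) (hn : 0 < n) (hdvd : k ∣ n) :
    ∃ (V : Type) (_ : Fintype V) (G : SimpleGraph V) (C : Fin k → Set V) (v : V),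
      Nat.card V = n + 1 ∧
      (∀ i, (C i).ncard = n / k + 1) ∧
      (∀ i j, i ≠ j → C i ∩ C j = {v}) ∧
      (⋃ i, C i) = Set.univ ∧
      (∀ x y, G.Adj x y ↔ x ≠ y ∧ ∃ i, x ∈ C i ∧ y ∈ C i) ∧
      G.Connected ∧ TriviallyPerfect G ∧ treeDepth G = n / k + 1 ∧
      (((n / k + 1) * n : ℕ) : ℕ∞) ≤ 2 * (rotationGraph G).ediam :=
  treedepth_diam_lower_bound_general k n hk hdvd
end

section
/- For every integer k ≥ 2 and every positive integer n that is a multiple of k−1, there exists a connected interval graph G on n+1 vertices of pathwidth k−1 such that δ(A(G)) ≥ nk/2. One such graph is induced by a sequence of cliques C_1, C_2, …, C_{n/(k−1)}, each of size k, such that any two consecutive cliques C_i and C_{i+1} share exactly one vertex and no other pair of cliques shares a vertex. -/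
/-!
Number the vertices of the path of `c` cliques of size `d + 1` as `0, …, d * c`, the `i`-th
clique being `{i * d, …, i * d + d}`. The two search trees that are the paths `0, 1, …, d * c`
and `d * c, …, 1, 0` orient every edge oppositely, while a rotation at `(a, b)` reverses at most
the edge `ab`. Hence their rotation distance is at least the number of edges,
`c * (d + 1) * d / 2 = n * k / 2`. The graph is an interval graph, `x` getting the interval from
`x` to the end of the first clique containing it, and its largest cliques are the cliques of the
path, so its pathwidth is `d = k - 1`.
-/

open SimpleGraph

open scoped symmDiff

section Rotation

variable {V : Type} {G : SimpleGraph V}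

theorem SearchTree.anc_iff_not_anc_s6 (T : SearchTree G) {u v : V} (h : G.Adj u v) :
    T.anc u v ↔ ¬T.anc v u :=
  ⟨fun h₁ h₂ => h.ne (T.antisymm u v h₁ h₂), (T.edge_comparable u v h).resolve_right⟩

theorem IsRotation.anc_iff_s6 {T T' : SearchTree G} {a b u v : V} (hr : IsRotation T T' a b)
    (huv : G.Adj u v) (hab : s(u, v) ≠ s(a, b)) : T'.anc u v ↔ T.anc u v := by
  have fixed : ∀ w, w ≠ a → w ≠ b → ∀ x, T'.anc w x ↔ T.anc w x :=
    fun w ha hb x => Set.ext_iff.mp (hr.2.2.2 w ha hb) x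
  by_cases hu : u ≠ a ∧ u ≠ b
  · exact fixed u hu.1 hu.2 v
  by_cases hv : v ≠ a ∧ v ≠ b
  · rw [T'.anc_iff_not_anc_s6 huv, T.anc_iff_not_anc_s6 huv, fixed v hv.1 hv.2 u]
  exact absurd (Sym2.eq_iff.mpr (by grind [huv.ne])) hab

def SearchTree.downDarts (T : SearchTree G) : Set G.Dart :=
  {d | T.anc d.fst d.snd}

instance SimpleGraph.Dart.finite [Finite V] : Finite G.Dart :=
  Finite.of_injective _ Dart.toProd_injective

theorem ncard_symmDiff_downDarts_le_two [Finite V] {T T' : SearchTree G}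
    (h : (rotationGraph G).Adj T T') : (T.downDarts ∆ T'.downDarts).ncard ≤ 2 := by
  classical
  obtain ⟨a, b, hr⟩ := h
  have hedge : ∀ d ∈ T.downDarts ∆ T'.downDarts,
      d.toProd ∈ (({(a, b), (b, a)} : Finset _) : Set (V × V)) := by
    intro d hd
    have : d.edge = s(a, b) := by
      by_contra hne
      have := hr.anc_iff_s6 d.adj hne
      simp only [Set.mem_symmDiff, SearchTree.downDarts, Set.mem_ofPred_eq] at hd
      tauto
    simpa [dart_edge_eq_mk'_iff] using this
  calc (T.downDarts ∆ T'.downDarts).ncard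
      ≤ (({(a, b), (b, a)} : Finset _) : Set (V × V)).ncard :=
        Set.ncard_le_ncard_of_injOn _ hedge Dart.toProd_injective.injOn
    _ ≤ 2 := by rw [Set.ncard_coe_finset]; exact Finset.card_le_two

theorem ncard_symmDiff_downDarts_le_two_mul_length [Finite V] {T T' : SearchTree G}
    (p : (rotationGraph G).Walk T T') :
    (T.downDarts ∆ T'.downDarts).ncard ≤ 2 * p.length := by
  induction p with
  | nil => simp
  | @cons T T'' T' h p ih =>
    calc (T.downDarts ∆ T'.downDarts).ncard
        ≤ (T.downDarts ∆ T''.downDarts ∪ T''.downDarts ∆ T'.downDarts).ncard :=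
          Set.ncard_le_ncard (symmDiff_triangle _ _ _)
      _ ≤ (T.downDarts ∆ T''.downDarts).ncard + (T''.downDarts ∆ T'.downDarts).ncard :=
          Set.ncard_union_le _ _
      _ ≤ 2 * (p.cons h).length := by
          rw [Walk.length_cons]
          linarith [ncard_symmDiff_downDarts_le_two h]

theorem natCard_dart_le_two_mul_edist [Finite V] {T T' : SearchTree G}
    (hrev : ∀ u v, G.Adj u v → T.anc u v → T'.anc v u) :
    (Nat.card G.Dart : ℕ∞) ≤ 2 * (rotationGraph G).edist T T' := by
  have hall : T.downDarts ∆ T'.downDarts = Set.univ := by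
    refine Set.eq_univ_of_forall fun d => ?_
    simp only [Set.mem_symmDiff, SearchTree.downDarts, Set.mem_ofPred_eq]
    by_cases hd : T.anc d.fst d.snd
    · exact Or.inl ⟨hd, (T'.anc_iff_not_anc_s6 d.adj).not.mpr (not_not.mpr (hrev _ _ d.adj hd))⟩
    · exact Or.inr ⟨hrev _ _ d.adj.symm ((T.anc_iff_not_anc_s6 d.adj.symm).mpr hd), hd⟩
  rcases eq_or_ne ((rotationGraph G).edist T T') ⊤ with h | h
  · simp [h]
  obtain ⟨p, hp⟩ := exists_walk_of_edist_ne_top h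
  rw [← hp, ← Set.ncard_univ, ← hall]
  exact_mod_cast ncard_symmDiff_downDarts_le_two_mul_length p

end Rotation

section PathOrder

theorem induce_connected_of_ordConnected {n : ℕ} {G : SimpleGraph (Fin n)}
    (hG : pathGraph n ≤ G) {S : Set (Fin n)} (hS : S.OrdConnected) (hne : S.Nonempty) :
    (G.induce S).Connected := by
  have : Nonempty S := hne.to_subtype
  suffices h : ∀ x y : S, x ≤ y → (G.induce S).Reachable x y from
    ⟨fun x y => (le_total x y).elim (h x y) fun hyx => (h y x hyx).symm⟩
  rintro ⟨x, hx⟩ ⟨⟨m, hm⟩, hmS⟩ (hxm : x.val ≤ m)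
  induction m, hxm using Nat.le_induction with
  | base => exact .rfl
  | succ m hxm ih =>
    have hmS' : (⟨m, by omega⟩ : Fin n) ∈ S := hS.out hx hmS ⟨hxm, Nat.le_succ m⟩
    refine (ih (by omega) hmS').trans (Adj.reachable ?_)
    exact hG (pathGraph_adj.mpr (Or.inl rfl))

variable {n : ℕ} {G : SimpleGraph (Fin (n + 1))}

def ascendingTree (hG : pathGraph (n + 1) ≤ G) : SearchTree G where
  anc u v := u ≤ v
  refl := le_refl
  antisymm _ _ := le_antisymm
  trans _ _ _ := le_trans
  chain u v _ _ _ := le_total u v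
  root := ⟨0, Fin.zero_le⟩
  edge_comparable u v _ := le_total u v
  desc_connected v := induce_connected_of_ordConnected hG Set.ordConnected_Ici ⟨v, le_refl v⟩

def descendingTree (hG : pathGraph (n + 1) ≤ G) : SearchTree G where
  anc u v := v ≤ u
  refl := le_refl
  antisymm _ _ h₁ h₂ := le_antisymm h₂ h₁
  trans _ _ _ h₁ h₂ := le_trans h₂ h₁
  chain u v _ _ _ := le_total v u
  root := ⟨Fin.last n, Fin.le_last⟩
  edge_comparable u v _ := le_total v u
  desc_connected v := induce_connected_of_ordConnected hG Set.ordConnected_Iic ⟨v, le_refl v⟩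

theorem natCard_dart_le_two_mul_ediam (hG : pathGraph (n + 1) ≤ G) :
    (Nat.card G.Dart : ℕ∞) ≤ 2 * (rotationGraph G).ediam :=
  (natCard_dart_le_two_mul_edist (T := ascendingTree hG) (T' := descendingTree hG)
    fun _ _ _ h => h).trans (mul_le_mul_right edist_le_ediam 2)

end PathOrder

section Pathwidth

variable {V : Type} [Finite V] {G H : SimpleGraph V}

theorem cliqueNum_mono (h : G ≤ H) : G.cliqueNum ≤ H.cliqueNum := by
  obtain ⟨s, hs⟩ := G.exists_isNClique_cliqueNum
  exact hs.card_eq ▸ (hs.isClique.mono h).card_le_cliqueNum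

theorem IsIntervalGraph.pathwidth_eq {k : ℕ} (hG : IsIntervalGraph G)
    (hk : G.cliqueNum = k + 1) : pathwidth G = k := by
  refine le_antisymm (Nat.sInf_le ⟨G, le_rfl, hG, hk⟩) (le_csInf ⟨k, G, le_rfl, hG, hk⟩ ?_)
  rintro m ⟨H, hGH, -, hm⟩
  have := cliqueNum_mono hGH
  omega

end Pathwidth

def cliqueBlock (d c i : ℕ) : Finset (Fin (d * c + 1)) :=
  Finset.univ.filter fun x => i * d ≤ x ∧ (x : ℕ) ≤ i * d + d

def cliquePath (d c : ℕ) : SimpleGraph (Fin (d * c + 1)) where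
  Adj x y := x ≠ y ∧ ∃ i : Fin c, x ∈ cliqueBlock d c i ∧ y ∈ cliqueBlock d c i
  symm := ⟨fun _ _ ⟨h, i, hx, hy⟩ => ⟨h.symm, i, hy, hx⟩⟩
  loopless := ⟨fun _ h => h.1 rfl⟩

namespace cliquePath

variable {d c i j : ℕ} {x y : Fin (d * c + 1)}

theorem mem_cliqueBlock : x ∈ cliqueBlock d c i ↔ i * d ≤ x ∧ (x : ℕ) ≤ i * d + d := by
  simp [cliqueBlock]

theorem map_cliqueBlock (hi : i < c) :
    (cliqueBlock d c i).map Fin.valEmbedding = Finset.Icc (i * d) (i * d + d) := by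
  ext m
  simp only [Finset.mem_map, Fin.valEmbedding_apply, mem_cliqueBlock, Finset.mem_Icc]
  refine ⟨fun ⟨x, hx, hxm⟩ => hxm ▸ hx, fun hm => ⟨⟨m, ?_⟩, hm, rfl⟩⟩
  have : i * d + d ≤ d * c := by nlinarith
  omega

theorem card_cliqueBlock (hi : i < c) : (cliqueBlock d c i).card = d + 1 := by
  rw [← Finset.card_map, map_cliqueBlock hi, Nat.card_Icc]
  omega

theorem isClique_cliqueBlock (hi : i < c) : (cliquePath d c).IsClique (cliqueBlock d c i) :=
  fun _ hx _ hy hxy => ⟨hxy, ⟨i, hi⟩, hx, hy⟩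

theorem eq_of_mem_cliqueBlock (hd : 0 < d) (hij : i < j) (hi : x ∈ cliqueBlock d c i)
    (hj : x ∈ cliqueBlock d c j) : j = i + 1 ∧ (x : ℕ) = j * d := by
  rw [mem_cliqueBlock] at hi hj
  have : j * d ≤ (i + 1) * d := by linarith
  have : j ≤ i + 1 := Nat.le_of_mul_le_mul_right this hd
  obtain rfl : j = i + 1 := by omega
  exact ⟨rfl, by linarith⟩

theorem cliqueBlock_inter_eq_empty (hd : 0 < d) (hij : i + 1 < j) :
    cliqueBlock d c i ∩ cliqueBlock d c j = ∅ := by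
  refine Finset.eq_empty_of_forall_notMem fun x hx => ?_
  rw [Finset.mem_inter] at hx
  have := (eq_of_mem_cliqueBlock hd (by omega) hx.1 hx.2).1
  omega

theorem card_cliqueBlock_inter_succ (hd : 0 < d) (hj : j < c) (hij : i + 1 = j) :
    (cliqueBlock d c i ∩ cliqueBlock d c j).card = 1 := by
  have hlt : j * d < d * c + 1 := by nlinarith
  refine Finset.card_eq_one.mpr ⟨⟨j * d, hlt⟩, Finset.eq_singleton_iff_unique_mem.mpr ⟨?_, ?_⟩⟩
  · simp only [Finset.mem_inter, mem_cliqueBlock]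
    subst hij
    constructor <;> constructor <;> nlinarith
  · intro x hx
    rw [Finset.mem_inter] at hx
    exact Fin.ext (eq_of_mem_cliqueBlock hd (by omega) hx.1 hx.2).2

theorem exists_mem_cliqueBlock (hd : 0 < d) (hc : 0 < c) (x : Fin (d * c + 1)) :
    ∃ i : Fin c, x ∈ cliqueBlock d c i := by
  rcases lt_or_eq_of_le (Fin.is_le x) with hx | hx
  · refine ⟨⟨x / d, (Nat.div_lt_iff_lt_mul hd).mpr (by linarith)⟩, ?_⟩
    exact mem_cliqueBlock.mpr ⟨Nat.div_mul_le_self _ _, (Nat.lt_div_mul_add hd).le⟩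
  · refine ⟨⟨c - 1, by omega⟩, mem_cliqueBlock.mpr ?_⟩
    show (c - 1) * d ≤ (x : ℕ) ∧ (x : ℕ) ≤ (c - 1) * d + d
    have : (c - 1) * d + d = d * c := by
      rw [← Nat.succ_mul, Nat.succ_eq_add_one, Nat.sub_add_cancel hc, Nat.mul_comm]
    omega

/-- `x / d * d + d` is the last vertex of the first block containing `x`. -/
theorem adj_iff_of_le (hd : 0 < d) (hxy : x ≤ y) :
    (cliquePath d c).Adj x y ↔ x ≠ y ∧ (y : ℕ) ≤ x / d * d + d := by
  refine ⟨fun ⟨hne, i, hx, hy⟩ => ⟨hne, ?_⟩, fun ⟨hne, hy⟩ => ⟨hne, ?_⟩⟩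
  · rw [mem_cliqueBlock] at hx hy
    have : (i : ℕ) ≤ x / d := (Nat.le_div_iff_mul_le hd).mpr hx.1
    nlinarith
  · have hx : (x : ℕ) < d * c := lt_of_lt_of_le (Fin.lt_def.mp (lt_of_le_of_ne hxy hne))
      (Fin.is_le y)
    refine ⟨⟨x / d, (Nat.div_lt_iff_lt_mul hd).mpr (by linarith)⟩, ?_, ?_⟩ <;>
      rw [mem_cliqueBlock]
    · exact ⟨Nat.div_mul_le_self _ _, (Nat.lt_div_mul_add hd).le⟩
    · exact ⟨(Nat.div_mul_le_self _ _).trans hxy, by linarith⟩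

theorem pathGraph_le (hd : 0 < d) : pathGraph (d * c + 1) ≤ cliquePath d c := by
  intro x y h
  wlog hxy : (x : ℕ) + 1 = y generalizing x y
  · exact (this h.symm ((pathGraph_adj.mp h).resolve_left hxy)).symm
  refine (adj_iff_of_le hd (Fin.le_iff_val_le_val.mpr (by omega))).mpr ⟨h.ne, ?_⟩
  have := Nat.lt_div_mul_add (a := x) hd
  omega

theorem connected (hd : 0 < d) : (cliquePath d c).Connected :=
  (pathGraph_connected _).mono (pathGraph_le hd)

theorem isIntervalGraph (hd : 0 < d) : IsIntervalGraph (cliquePath d c) := by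
  let hi : Fin (d * c + 1) → ℕ := fun x => x / d * d + d
  have hle : ∀ x : Fin (d * c + 1), (x : ℕ) ≤ hi x := fun x => (Nat.lt_div_mul_add hd).le
  have key : ∀ x y, x ≤ y →
      ((cliquePath d c).Adj x y ↔ x ≠ y ∧ (x : ℕ) ≤ hi y ∧ (y : ℕ) ≤ hi x) := fun x y hxy => by
    rw [adj_iff_of_le hd hxy]
    exact ⟨fun h => ⟨h.1, (Fin.le_def.mp hxy).trans (hle y), h.2⟩, fun h => ⟨h.1, h.2.2⟩⟩
  refine ⟨fun x => (x : ℕ), fun x => (hi x : ℕ), fun x => ?_, fun x y => ?_⟩ <;> dsimp only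
  · exact_mod_cast hle x
  norm_cast
  rcases le_total x y with hxy | hxy
  · exact key x y hxy
  · rw [adj_comm, key y x hxy, ne_comm]
    tauto

theorem card_le_of_isClique (hd : 0 < d) {s : Finset (Fin (d * c + 1))}
    (hs : (cliquePath d c).IsClique s) : s.card ≤ d + 1 := by
  rcases s.eq_empty_or_nonempty with rfl | hs₀
  · simp
  set x := s.min' hs₀
  have hsub : s.map Fin.valEmbedding ⊆ Finset.Icc (x : ℕ) (x + d) := by
    intro m hm
    obtain ⟨y, hy, rfl⟩ := Finset.mem_map.mp hm
    have hxy : x ≤ y := s.min'_le y hy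
    rcases eq_or_ne x y with rfl | hne
    · simp
    have := ((adj_iff_of_le hd hxy).mp (hs (s.min'_mem hs₀) hy hne)).2
    have := Nat.div_mul_le_self (x : ℕ) d
    simp only [Fin.valEmbedding_apply, Finset.mem_Icc]
    omega
  have := Finset.card_le_card hsub
  simp only [Finset.card_map, Nat.card_Icc] at this
  omega

theorem cliqueNum_eq (hd : 0 < d) (hc : 0 < c) : (cliquePath d c).cliqueNum = d + 1 := by
  refine le_antisymm ?_ ?_
  · obtain ⟨s, hs⟩ := (cliquePath d c).exists_isNClique_cliqueNum
    exact hs.card_eq ▸ card_le_of_isClique hd hs.isClique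
  · exact card_cliqueBlock hc ▸ (isClique_cliqueBlock hc).card_le_cliqueNum

theorem natCard_dart (hd : 0 < d) : Nat.card (cliquePath d c).Dart = d * c * (d + 1) := by
  classical
  have hrange : Set.range (Dart.toProd (G := cliquePath d c)) =
      ↑(Finset.univ.biUnion fun i : Fin c => (cliqueBlock d c i).offDiag) := by
    ext ⟨x, y⟩
    simp only [Set.mem_range, Finset.coe_biUnion, Finset.mem_coe, Finset.mem_offDiag,
      Finset.coe_univ, Set.mem_univ, Set.iUnion_true, Set.mem_iUnion]
    refine ⟨fun ⟨e, he⟩ => ?_, fun ⟨i, hx, hy, hne⟩ => ⟨⟨(x, y), hne, i, hx, hy⟩, rfl⟩⟩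
    obtain ⟨hne, i, hx, hy⟩ := he ▸ e.adj
    exact ⟨i, hx, hy, hne⟩
  have hdisj : ∀ i j : Fin c, i < j →
      Disjoint (cliqueBlock d c i).offDiag (cliqueBlock d c j).offDiag := by
    refine fun i j hlt => Finset.disjoint_left.mpr fun p hi hj => ?_
    rw [Finset.mem_offDiag] at hi hj
    exact hi.2.2 (Fin.ext ((eq_of_mem_cliqueBlock hd hlt hi.1 hj.1).2.trans
      (eq_of_mem_cliqueBlock hd hlt hi.2.1 hj.2.1).2.symm))
  rw [← Set.ncard_range_of_injective Dart.toProd_injective, hrange, Set.ncard_coe_finset,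
    Finset.card_biUnion fun i _ j _ hij =>
      hij.lt_or_gt.elim (hdisj i j) fun h => (hdisj j i h).symm]
  simp only [Finset.offDiag_card, card_cliqueBlock (Fin.is_lt _), Finset.sum_const,
    Finset.card_univ, Fintype.card_fin, smul_eq_mul]
  rw [← Nat.mul_sub_one, Nat.add_sub_cancel]
  ring

end cliquePath

/-- For every integer `k ≥ 2` and every positive `n` divisible by
`k - 1`, there exists a connected interval graph `G` on `n + 1` vertices of pathwidth
`k - 1` with `δ(A(G)) ≥ n * k / 2` (stated below as `n * k ≤ 2 * δ(A(G))`). One such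
graph is the union of a sequence of cliques `C 0, …, C (n/(k-1) - 1)`, each of size
`k`, consecutive cliques sharing exactly one vertex and no other pair of cliques
sharing a vertex. -/
theorem pathwidth_diam_lower_bound (k n : ℕ) (hk : 2 ≤ k) (hn : 0 < n)
    (hdvd : (k - 1) ∣ n) :
    ∃ (V : Type) (_ : Fintype V) (G : SimpleGraph V) (C : Fin (n / (k - 1)) → Set V),
      Nat.card V = n + 1 ∧
      (∀ i, (C i).ncard = k) ∧
      (∀ i j : Fin (n / (k - 1)), (i : ℕ) + 1 = (j : ℕ) → (C i ∩ C j).ncard = 1) ∧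
      (∀ i j : Fin (n / (k - 1)), (i : ℕ) + 1 < (j : ℕ) → C i ∩ C j = ∅) ∧
      (⋃ i, C i) = Set.univ ∧
      (∀ x y, G.Adj x y ↔ x ≠ y ∧ ∃ i, x ∈ C i ∧ y ∈ C i) ∧
      G.Connected ∧ IsIntervalGraph G ∧ pathwidth G = k - 1 ∧
      ((n * k : ℕ) : ℕ∞) ≤ 2 * (rotationGraph G).ediam := by
  obtain ⟨d, rfl⟩ : ∃ d, k = d + 1 := ⟨k - 1, by omega⟩
  obtain ⟨c, rfl⟩ := hdvd
  rw [Nat.add_sub_cancel] at hn ⊢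
  have hd : 0 < d := by omega
  have hc : 0 < c := Nat.pos_of_mul_pos_left hn
  rw [Nat.mul_div_cancel_left c hd]
  refine ⟨Fin (d * c + 1), inferInstance, cliquePath d c, fun i => cliqueBlock d c i,
    by simp, fun i => ?_, fun i j hij => ?_, fun i j hij => ?_, ?_, fun x y => Iff.rfl,
    cliquePath.connected hd, cliquePath.isIntervalGraph hd,
    (cliquePath.isIntervalGraph hd).pathwidth_eq (cliquePath.cliqueNum_eq hd hc), ?_⟩
  · rw [Set.ncard_coe_finset, cliquePath.card_cliqueBlock i.is_lt]
  · rw [← Finset.coe_inter, Set.ncard_coe_finset,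
      cliquePath.card_cliqueBlock_inter_succ hd j.is_lt hij]
  · rw [← Finset.coe_inter, cliquePath.cliqueBlock_inter_eq_empty hd hij, Finset.coe_empty]
  · exact Set.iUnion_eq_univ_iff.mpr (cliquePath.exists_mem_cliqueBlock hd hc)
  · rw [← cliquePath.natCard_dart hd]
    exact natCard_dart_le_two_mul_ediam (cliquePath.pathGraph_le hd)
end

section
/- Let p, q be positive integers and let α, β be integers with 0 ≤ α < p and 0 ≤ β < q. Let T1 be the search tree on SPK_{p,q} that is a path whose vertices from the root downward are x_1, x_2, …, x_α, y_1, y_2, …, y_q, x_{α+1}, …, x_p, and let T2 be the search tree that is a path whose vertices from the root downward are y_q, y_{q−1}, …, y_{β+1}, x_p, y_β, …, y_1, x_{p−1}, …, x_1. Then dist(T1, T2) ≥ p(p−1)/2 + αq + min{ q(q−1)/2 + β, 2q(p−α) − β }. -/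
open SimpleGraph

/-- Position of each vertex of `SPK p q` along the path
`x_1, …, x_α, y_1, …, y_q, x_{α+1}, …, x_p` (indices of `Fin` are 0-based,
so `Sum.inl i` is `x_{i+1}` and `Sum.inr j` is `y_{j+1}`). -/
def posT1 (q α : ℕ) {p : ℕ} : Fin p ⊕ Fin q → ℕ
  | .inl i => if (i : ℕ) < α then (i : ℕ) else (i : ℕ) + q
  | .inr j => α + (j : ℕ)

/-- Position of each vertex of `SPK p q` along the path
`y_q, y_{q-1}, …, y_{β+1}, x_p, y_β, …, y_1, x_{p-1}, …, x_1`. -/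
def posT2 (q β : ℕ) {p : ℕ} : Fin p ⊕ Fin q → ℕ
  | .inl i => if (i : ℕ) = p - 1 then q - β else q + p - 1 - (i : ℕ)
  | .inr j => if β ≤ (j : ℕ) then q - 1 - (j : ℕ) else q - (j : ℕ)

/-!
Any two vertices of `SPK p q` other than two vertices of `Q` are adjacent, hence comparable in
every search tree, and a rotation at `(a, b)` reverses the order of no adjacent pair other than
`(a, b)`. So the number of pairs ordered against `T2` drops by at most one per rotation, except
when a rotation separates two comparable vertices of `Q`; this happens only when `a ∈ Q` loses
its last clique descendant `b`.

To pay for this, for `S ⊆ Q` let `Φ_S(U)` count the pairs of `U` ordered against `T2`, but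
charge each `y ∈ S` once for every clique vertex below it in `U` and once for every clique vertex
below it in `T2`, and never charge a pair inside `S`. For each rotation `U → U'` and each `S'`
some `S` has `Φ_S(U) ≤ Φ_{S'}(U') + 1`: either `S = S'`, or, when `a` loses its last clique
descendant, `S` is `S'` together with the vertices of `Q` below `a`. As `Φ_∅(T2) = 0`, every
rotation path from `T1` to `T2` is at least as long as some
`Φ_S(T1) = C(p,2) + α q + β + C(q,2) + 2 #S (p - α) - C(#S,2) - 2 #{j ∈ S | j < β}`,
and minimising over `S` gives the bound.
-/

open Finset

theorem Nat.choose_two_mul_two (n : ℕ) : n.choose 2 * 2 = n * (n - 1) := by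
  rw [Nat.choose_two_right]
  exact Nat.div_mul_cancel (Nat.even_mul_pred_self n).two_dvd

theorem Finset.card_filter_fst_lt_snd {α : Type*} [LinearOrder α] (s : Finset α) :
    #{e ∈ s ×ˢ s | e.1 < e.2} = (#s).choose 2 := by
  induction s using Finset.induction_on_max with
  | empty => simp
  | insert a s hlt ih =>
    have ha : a ∉ s := fun h => lt_irrefl a (hlt a h)
    have hsplit : {e ∈ insert a s ×ˢ insert a s | e.1 < e.2} =
        {e ∈ s ×ˢ s | e.1 < e.2} ∪ s ×ˢ {a} := by
      ext ⟨x, y⟩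
      simp only [mem_filter, mem_product, mem_insert, mem_union, mem_singleton]
      have := hlt x
      have := hlt y
      grind
    have hdisj : Disjoint {e ∈ s ×ˢ s | e.1 < e.2} (s ×ˢ {a}) :=
      disjoint_left.mpr fun e he he' => ha (by grind)
    rw [hsplit, card_union_of_disjoint hdisj, ih, card_product, card_singleton, mul_one,
      card_insert_of_notMem ha, Nat.choose_succ_succ', Nat.choose_one_right, add_comm]

theorem Fin.card_filter_le_val {n m : ℕ} : #{i : Fin n | m ≤ (i : ℕ)} = n - m := by
  have h := card_filter_add_card_filter_not (s := univ) (fun i : Fin n => (i : ℕ) < m)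
  simp only [not_lt, Fin.card_filter_val_lt, card_univ, Fintype.card_fin] at h
  omega

namespace IsRotation

variable {V : Type} {G : SimpleGraph V} {U U' : SearchTree G} {a b u v : V}

theorem anc_b_iff (hR : IsRotation U U' a b) (w : V) : U'.anc b w ↔ U.anc a w :=
  Set.ext_iff.mp hR.2.2.1 w

theorem anc_iff_of_ne (hR : IsRotation U U' a b) (ha : u ≠ a) (hb : u ≠ b) (w : V) :
    U'.anc u w ↔ U.anc u w :=
  Set.ext_iff.mp (hR.2.2.2 u ha hb) w

theorem eq_or_eq_of_anc_of_anc (hR : IsRotation U U' a b) (hau : U.anc a u) (hub : U.anc u b) :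
    u = a ∨ u = b := by
  by_contra! h
  exact h.2 (U'.antisymm u b ((hR.anc_iff_of_ne h.1 h.2 b).mpr hub) ((hR.anc_b_iff u).mpr hau))

theorem anc_and_ne_b_of_anc_a (hR : IsRotation U U' a b) (h : U'.anc a v) :
    U.anc a v ∧ v ≠ b := by
  have hba : U'.anc b a := (hR.anc_b_iff a).mpr (U.refl a)
  refine ⟨(hR.anc_b_iff v).mp (U'.trans _ _ _ hba h), ?_⟩
  rintro rfl
  exact hR.1 (U'.antisymm a v h hba)

theorem anc_of_ne (hR : IsRotation U U' a b) (h : U.anc u v) (hu : u ≠ a) : U'.anc u v := by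
  by_cases hub : u = b
  · subst hub
    exact (hR.anc_b_iff v).mpr (U.trans _ _ _ hR.2.1 h)
  · exact (hR.anc_iff_of_ne hu hub v).mpr h

theorem anc_of_adj (hR : IsRotation U U' a b) (hadj : G.Adj u v) (h : U.anc u v)
    (hne : ¬(u = a ∧ v = b)) : U'.anc u v := by
  by_cases hua : u = a
  · subst hua
    have hvb : v ≠ b := fun hvb => hne ⟨rfl, hvb⟩
    refine (U'.edge_comparable u v hadj).resolve_right fun hvu => hadj.ne ?_
    exact U.antisymm u v h ((hR.anc_iff_of_ne hadj.ne.symm hvb u).mp hvu)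
  · exact hR.anc_of_ne h hua

/-- A vertex `x ≠ b` below `a` that is adjacent to everything keeps the subtree of `a` in
one piece, so the rotation reverses the pair `(a, b)` and nothing else. -/
theorem anc_of_anc_of_universal (hR : IsRotation U U' a b) {x : V} (hxb : x ≠ b)
    (hax : U.anc a x) (hx : ∀ w, w ≠ x → G.Adj x w) (h : U.anc u v)
    (hne : ¬(u = a ∧ v = b)) : U'.anc u v := by
  by_cases hua : u = a
  swap
  · exact hR.anc_of_ne h hua
  subst hua
  by_cases hvu : v = u
  · exact hvu ▸ U'.refl v
  by_cases hadj : G.Adj u v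
  · exact hR.anc_of_adj hadj h hne
  have hvb : v ≠ b := fun hvb => hne ⟨rfl, hvb⟩
  have hxu : x ≠ u := by rintro rfl; exact hadj (hx v hvu)
  have hxv : x ≠ v := by rintro rfl; exact hadj (hx u hxu.symm).symm
  have hux : U'.anc u x := hR.anc_of_adj (hx u hxu.symm).symm hax (fun h' => hxb h'.2)
  rcases U.edge_comparable x v (hx v (Ne.symm hxv)) with hxv' | hvx
  · exact U'.trans _ _ _ hux (hR.anc_of_ne hxv' hxu)
  · have hvx' : U'.anc v x := (hR.anc_iff_of_ne hvu hvb x).mpr hvx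
    refine (U'.chain u v x hux hvx').resolve_right fun hvu' => hvu ?_
    exact U.antisymm v u ((hR.anc_iff_of_ne hvu hvb u).mp hvu') h

end IsRotation

namespace SPK

variable {p q : ℕ}

theorem adj_inl {i : Fin p} {w : Fin p ⊕ Fin q} (h : w ≠ .inl i) : (SPK p q).Adj (.inl i) w :=
  ⟨h.symm, Or.inl rfl⟩

variable (β : ℕ)

/-- In `T2`, the clique vertex `x_{i+1}` lies above `y_{j+1}` exactly when `XAboveY β i j`. -/
def XAboveY (i : Fin p) (j : Fin q) : Prop := (i : ℕ) = p - 1 ∧ (j : ℕ) < β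

instance (i : Fin p) (j : Fin q) : Decidable (XAboveY β i j) :=
  inferInstanceAs (Decidable (_ ∧ _))

/-- The pairs `u` above `v` in `U` that `T2` orders the other way, except that `y_j` with
`j ∈ S` is charged for the clique vertices below it in `U` and for those below it in `T2`. -/
def Charged (S : Finset (Fin q)) (U : SearchTree (SPK p q)) :
    Fin p ⊕ Fin q → Fin p ⊕ Fin q → Prop
  | .inl i, .inl k => i < k ∧ U.anc (.inl i) (.inl k)
  | .inr j, .inl i => (j ∈ S ∨ XAboveY β i j) ∧ U.anc (.inr j) (.inl i)
  | .inl i, .inr j => ¬XAboveY β i j ∧ (j ∈ S ∨ U.anc (.inl i) (.inr j))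
  | .inr j, .inr k => j < k ∧ ¬(j ∈ S ∧ k ∈ S) ∧ U.anc (.inr j) (.inr k)

open Classical in
noncomputable def potential (S : Finset (Fin q)) (U : SearchTree (SPK p q)) : ℕ :=
  #{e : (Fin p ⊕ Fin q) × (Fin p ⊕ Fin q) | Charged β S U e.1 e.2}

variable {β} {S : Finset (Fin q)} {U U' : SearchTree (SPK p q)} {u v : Fin p ⊕ Fin q}

theorem Charged.mono (h : Charged β S U u v) (hUU' : U.anc u v → U'.anc u v) :
    Charged β S U' u v := by
  rcases u with i | j <;> rcases v with k | k <;> simp only [Charged] at h ⊢ <;> tauto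

theorem Charged.anc_and_posT2_lt (h : Charged β ∅ U u v) :
    U.anc u v ∧ posT2 q β v < posT2 q β u := by
  rcases u with i | j <;> rcases v with k | k <;>
    simp only [Charged, XAboveY, notMem_empty, false_or, false_and, not_false_eq_true,
      true_and] at h <;>
    exact ⟨h.2, by simp only [posT2]; grind⟩

section Isolating

variable {ja : Fin q} {b : Fin p ⊕ Fin q} (hR : IsRotation U U' (.inr ja) b)
  (honly : ∀ i, U.anc (.inr ja) (.inl i) → .inl i = b)
include hR honly

theorem eq_of_anc_inr_of_anc_inl {j : Fin q} {i : Fin p} (hj : U.anc (.inr ja) (.inr j))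
    (hji : U.anc (.inr j) (.inl i)) : j = ja ∧ .inl i = b := by
  have hib := honly i (U.trans _ _ _ hj hji)
  refine ⟨?_, hib⟩
  rcases hR.eq_or_eq_of_anc_of_anc hj (hib ▸ hji) with h | h
  · exact Sum.inr_injective h
  · exact absurd (h.trans hib.symm) Sum.inr_ne_inl

theorem not_anc_inl_of_anc_inr {j : Fin q} (hj : U.anc (.inr ja) (.inr j)) (i : Fin p) :
    ¬U'.anc (.inr j) (.inl i) := by
  intro h
  by_cases hja : j = ja
  · subst hja
    obtain ⟨hU, hib⟩ := hR.anc_and_ne_b_of_anc_a h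
    exact hib (honly i hU)
  by_cases hjb : .inr j = b
  · subst hjb
    exact Sum.inl_ne_inr (honly i ((hR.anc_b_iff _).mp h))
  · have hU := (hR.anc_iff_of_ne (by simpa using hja) hjb _).mp h
    exact hja (eq_of_anc_inr_of_anc_inl hR honly hj hU).1

open Classical in
/-- When the rotation leaves `y_ja` without clique descendants, adding every `y_j` below `y_ja`
to `S'` stops charging the pairs of `y`'s that the rotation separates. -/
theorem Charged.of_isolating (S' : Finset (Fin q))
    (h : Charged β (S' ∪ ({j | U.anc (.inr ja) (.inr j)} : Finset (Fin q))) U u v) :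
    Charged β S' U' u v ∨ (u = .inr ja ∧ v = b) := by
  by_cases hab : u = .inr ja ∧ v = b
  · exact Or.inr hab
  left
  rcases u with i | j <;> rcases v with k | k <;>
    simp only [Charged, mem_union, mem_filter, mem_univ, true_and] at h ⊢
  · exact ⟨h.1, hR.anc_of_ne h.2 Sum.inl_ne_inr⟩
  · refine ⟨h.1, ?_⟩
    rcases h.2 with (hk | hk) | hk
    · exact Or.inl hk
    · exact Or.inr ((U'.edge_comparable _ _ (adj_inl Sum.inr_ne_inl)).resolve_right
        (not_anc_inl_of_anc_inr hR honly hk i))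
    · exact Or.inr (hR.anc_of_ne hk Sum.inl_ne_inr)
  · refine ⟨?_, hR.anc_of_adj (adj_inl Sum.inr_ne_inl).symm h.2 hab⟩
    rcases h.1 with (hj | hj) | hj
    · exact Or.inl hj
    · exact absurd (eq_of_anc_inr_of_anc_inl hR honly hj h.2) (by simpa using hab)
    · exact Or.inr hj
  · refine ⟨h.1, fun hjk => h.2.1 ⟨Or.inl hjk.1, Or.inl hjk.2⟩, ?_⟩
    by_cases hja : j = ja
    · subst hja
      exact absurd ⟨Or.inr (U.refl _), Or.inr h.2.2⟩ h.2.1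
    · exact hR.anc_of_ne h.2.2 (by simpa using hja)

end Isolating

theorem exists_charged_imp {a b : Fin p ⊕ Fin q} (hR : IsRotation U U' a b)
    (S' : Finset (Fin q)) :
    ∃ S : Finset (Fin q), ∀ u v,
      Charged β S U u v → Charged β S' U' u v ∨ (u = a ∧ v = b) := by
  by_cases honly : ∀ i, U.anc a (.inl i) → .inl i = b
  · obtain ⟨ja, rfl⟩ : ∃ ja, a = .inr ja := by
      rcases a with i | ja
      · exact absurd (honly i (U.refl _)) hR.1
      · exact ⟨ja, rfl⟩
    exact ⟨_, fun u v => Charged.of_isolating hR honly S'⟩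
  · push Not at honly
    obtain ⟨i, hai, hib⟩ := honly
    refine ⟨S', fun u v h => or_iff_not_imp_right.mpr fun hab => h.mono fun huv => ?_⟩
    exact hR.anc_of_anc_of_universal hib hai (fun w hw => adj_inl hw) huv hab

theorem exists_potential_le_succ (hUU' : (rotationGraph (SPK p q)).Adj U U')
    (S' : Finset (Fin q)) :
    ∃ S, potential β S U ≤ potential β S' U' + 1 := by
  classical
  obtain ⟨a, b, hR⟩ := hUU'
  obtain ⟨S, hS⟩ := exists_charged_imp (β := β) hR S'
  refine ⟨S, (card_le_card fun e he => ?_).trans (card_insert_le (a, b) _)⟩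
  rw [mem_filter] at he
  rcases hS e.1 e.2 he.2 with h | h
  · exact mem_insert_of_mem (mem_filter.mpr ⟨mem_univ _, h⟩)
  · exact mem_insert.mpr (Or.inl (Prod.ext h.1 h.2))

theorem exists_potential_le_length {X Y : SearchTree (SPK p q)}
    (W : (rotationGraph (SPK p q)).Walk X Y) (S' : Finset (Fin q)) :
    ∃ S, potential β S X ≤ W.length + potential β S' Y := by
  induction W with
  | nil => exact ⟨S', by simp⟩
  | cons hXZ _ ih =>
    obtain ⟨S₁, h₁⟩ := ih
    obtain ⟨S, hS⟩ := exists_potential_le_succ (β := β) hXZ S₁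
    exact ⟨S, by rw [SimpleGraph.Walk.length_cons]; omega⟩

theorem potential_empty_eq_zero {T2 : SearchTree (SPK p q)}
    (hT2 : ∀ u v, T2.anc u v ↔ posT2 q β u ≤ posT2 q β v) : potential β ∅ T2 = 0 := by
  classical
  rw [potential, card_eq_zero, filter_eq_empty_iff]
  rintro ⟨u, v⟩ - h
  obtain ⟨huv, hlt⟩ := h.anc_and_posT2_lt
  exact absurd ((hT2 u v).mp huv) hlt.not_ge

open Classical in
theorem potential_eq (S : Finset (Fin q)) (U : SearchTree (SPK p q)) :
    potential β S U = #{e : Fin p × Fin p | Charged β S U (.inl e.1) (.inl e.2)} +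
      ∑ j, (#{i | Charged β S U (.inl i) (.inr j)} + #{i | Charged β S U (.inr j) (.inl i)}) +
      #{e : Fin q × Fin q | Charged β S U (.inr e.1) (.inr e.2)} := by
  simp only [potential, card_filter, Fintype.sum_prod_type, Fintype.sum_sum_type, sum_add_distrib]
  rw [sum_comm (s := univ (α := Fin p)) (t := univ (α := Fin q))]
  ring

theorem sum_xAboveY (hp : 0 < p) (j : Fin q) :
    (∑ i : Fin p, if XAboveY β i j then 1 else 0) = if (j : ℕ) < β then 1 else 0 := by
  have hlast : #{i : Fin p | (i : ℕ) = p - 1} = #{i : Fin p | p - 1 ≤ (i : ℕ)} :=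
    congrArg card (filter_congr fun i _ => by omega)
  simp only [XAboveY, and_comm (a := (_ : ℕ) = _), ite_and]
  split_ifs
  · rw [sum_boole, hlast, Fin.card_filter_le_val, Nat.cast_id]
    omega
  · simp

/-- `2 z P - C(z,2)` is concave in `z`, so it is smallest at `z = 0` or at `z = q`; these two
cases give the two arguments of the `min`. -/
theorem min_add_choose_two_le {q P β z s : ℕ} (hP : 1 ≤ P) (hz : z ≤ q) (hsz : s ≤ z)
    (hsβ : s ≤ β) :
    min (q.choose 2 + β) (2 * q * P - β) + z.choose 2 + 2 * s ≤
      2 * (z * P) + β + q.choose 2 := by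
  obtain ⟨d, rfl⟩ := Nat.exists_eq_add_of_le hz
  by_cases h : z.choose 2 + 2 * s ≤ 2 * (z * P)
  · have := min_le_left ((z + d).choose 2 + β) (2 * (z + d) * P - β)
    omega
  obtain ⟨w, rfl⟩ : ∃ w, z = w + 1 :=
    Nat.exists_eq_succ_of_ne_zero (by rintro rfl; simp at h; omega)
  have hz2 := Nat.choose_two_mul_two (w + 1)
  have hq2 := Nat.choose_two_mul_two (w + 1 + d)
  simp only [Nat.add_sub_cancel, show w + 1 + d - 1 = w + d by omega] at hz2 hq2
  have h4P : 4 * P ≤ w + 3 := by nlinarith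
  have key : 2 * d * P + (w + 1).choose 2 ≤ (w + 1 + d).choose 2 := by
    rcases d with _ | d
    · simp
    have hw : w + 3 ≤ 2 * w + 1 + (d + 1) := by omega
    nlinarith [Nat.mul_le_mul_left (d + 1) h4P, Nat.mul_le_mul_left (d + 1) hw]
  have := min_le_right ((w + 1 + d).choose 2 + β) (2 * (w + 1 + d) * P - β)
  have : 2 * (w + 1 + d) * P = 2 * d * P + 2 * ((w + 1) * P) := by ring
  have : w + 1 ≤ (w + 1) * P := Nat.le_mul_of_pos_right _ hP
  omega

section T1

variable {α : ℕ} {T1 : SearchTree (SPK p q)}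
  (hT1 : ∀ u v, T1.anc u v ↔ posT1 q α u ≤ posT1 q α v)
include hT1

theorem anc_inl_inr_iff_of_posT1 (i : Fin p) (j : Fin q) :
    T1.anc (.inl i) (.inr j) ↔ (i : ℕ) < α := by
  rw [hT1]; simp only [posT1]; split_ifs <;> omega

theorem anc_inr_inl_iff_of_posT1 (i : Fin p) (j : Fin q) :
    T1.anc (.inr j) (.inl i) ↔ α ≤ (i : ℕ) := by
  rw [hT1]; simp only [posT1]; split_ifs <;> omega

open Classical in
theorem card_charged_inl_inl_of_posT1 :
    #{e : Fin p × Fin p | Charged β S T1 (.inl e.1) (.inl e.2)} = p.choose 2 := by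
  have h := Finset.card_filter_fst_lt_snd (univ : Finset (Fin p))
  rw [univ_product_univ, card_univ, Fintype.card_fin] at h
  rw [← h]
  congr 1
  refine filter_congr fun e _ => ⟨fun h => h.1, fun h => ⟨h, (hT1 _ _).mpr ?_⟩⟩
  simp only [posT1]
  have : (e.1 : ℕ) < e.2 := h
  split_ifs <;> omega

open Classical in
theorem card_charged_inr_inr_of_posT1 :
    #{e : Fin q × Fin q | Charged β S T1 (.inr e.1) (.inr e.2)} + (#S).choose 2 =
      q.choose 2 := by
  have hq := Finset.card_filter_fst_lt_snd (univ : Finset (Fin q))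
  rw [univ_product_univ, card_univ, Fintype.card_fin] at hq
  have hS := Finset.card_filter_fst_lt_snd S
  have hsplit := card_filter_add_card_filter_not (s := {e : Fin q × Fin q | e.1 < e.2})
    (fun e => e.1 ∈ S ∧ e.2 ∈ S)
  have hin : ({e ∈ {e : Fin q × Fin q | e.1 < e.2} | e.1 ∈ S ∧ e.2 ∈ S} : Finset _) =
      {e ∈ S ×ˢ S | e.1 < e.2} := by
    ext e; simp only [mem_filter, mem_univ, true_and, mem_product]; tauto
  have hout : ({e ∈ {e : Fin q × Fin q | e.1 < e.2} | ¬(e.1 ∈ S ∧ e.2 ∈ S)} : Finset _) =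
      ({e : Fin q × Fin q | Charged β S T1 (.inr e.1) (.inr e.2)} : Finset _) := by
    ext e
    simp only [mem_filter, mem_univ, true_and]
    simp only [Charged]
    refine and_congr_right fun hlt => (and_iff_left ((hT1 _ _).mpr ?_)).symm
    simp only [posT1]
    have : (e.1 : ℕ) < e.2 := hlt
    omega
  rw [hin, hout] at hsplit
  omega

open Classical in
theorem card_charged_column_of_posT1 (hα : α < p) (j : Fin q) :
    #{i | Charged β S T1 (.inl i) (.inr j)} + #{i | Charged β S T1 (.inr j) (.inl i)} +
        2 * (if j ∈ S ∧ (j : ℕ) < β then 1 else 0) =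
      α + (if (j : ℕ) < β then 1 else 0) + 2 * (if j ∈ S then p - α else 0) := by
  have hpair : ∀ i : Fin p,
      ((if Charged β S T1 (.inl i) (.inr j) then 1 else 0) +
          (if Charged β S T1 (.inr j) (.inl i) then 1 else 0)) +
          2 * (if j ∈ S then (if XAboveY β i j then 1 else 0) else 0) =
        (if (i : ℕ) < α then 1 else 0) + (if XAboveY β i j then 1 else 0) +
          2 * (if j ∈ S then (if α ≤ (i : ℕ) then 1 else 0) else 0) := by
    intro i
    have hX : XAboveY β i j → α ≤ (i : ℕ) := fun h => h.1 ▸ Nat.le_sub_one_of_lt hα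
    simp only [Charged, anc_inl_inr_iff_of_posT1 hT1, anc_inr_inl_iff_of_posT1 hT1]
    split_ifs <;> grind
  have hsum := sum_congr rfl fun i (_ : i ∈ univ) => hpair i
  simp only [sum_add_distrib, ← mul_sum, sum_xAboveY (Nat.zero_lt_of_lt hα) j] at hsum
  have hlt : (∑ i : Fin p, if (i : ℕ) < α then 1 else 0) = α := by
    rw [← card_filter, Fin.card_filter_val_lt, min_eq_right hα.le]
  have hge : (∑ i : Fin p, if α ≤ (i : ℕ) then 1 else 0) = p - α := by
    rw [← card_filter, Fin.card_filter_le_val]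
  by_cases hj : j ∈ S <;>
    simp only [hj, true_and, false_and, if_false, if_true, sum_const_zero, card_filter,
      hlt, hge, sum_xAboveY (Nat.zero_lt_of_lt hα) j] at hsum ⊢ <;>
    omega

open Classical in
theorem sum_card_charged_columns_of_posT1 (hα : α < p) (hβ : β ≤ q) :
    ∑ j, (#{i | Charged β S T1 (.inl i) (.inr j)} + #{i | Charged β S T1 (.inr j) (.inl i)}) +
        2 * #{j | j ∈ S ∧ (j : ℕ) < β} = q * α + β + 2 * (#S * (p - α)) := by
  have h := sum_congr rfl fun j (_ : j ∈ univ) =>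
    card_charged_column_of_posT1 hT1 (β := β) (S := S) hα j
  simp only [sum_add_distrib, ← mul_sum, ← card_filter, sum_const, card_univ, Fintype.card_fin,
    smul_eq_mul, Fin.card_filter_val_lt, min_eq_right hβ, sum_ite_mem, univ_inter] at h
  rwa [sum_add_distrib]

open Classical in
theorem le_potential_of_posT1 (hα : α < p) (hβ : β ≤ q) (S : Finset (Fin q)) :
    p.choose 2 + α * q + min (q.choose 2 + β) (2 * q * (p - α) - β) ≤ potential β S T1 := by
  have hcols := sum_card_charged_columns_of_posT1 hT1 (S := S) hα hβ
  have hYY := card_charged_inr_inr_of_posT1 hT1 (β := β) (S := S)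
  have hsS : #{j | j ∈ S ∧ (j : ℕ) < β} ≤ #S :=
    card_le_card fun j hj => (mem_filter.mp hj).2.1
  have hsβ : #{j | j ∈ S ∧ (j : ℕ) < β} ≤ β :=
    (card_le_card fun j hj => mem_filter.mpr ⟨mem_univ _, (mem_filter.mp hj).2.2⟩).trans
      (Fin.card_filter_val_lt.trans_le (min_le_right _ _))
  have := min_add_choose_two_le (q := q) (β := β) (P := p - α) (by omega)
    ((card_le_univ S).trans_eq (Fintype.card_fin q)) hsS hsβ
  rw [potential_eq, card_charged_inl_inl_of_posT1 hT1, mul_comm α q]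
  omega

end T1

end SPK

theorem spk_dist_T1_T2_lower_general (p q α β : ℕ)
    (hα : α < p) (hβ : β < q) (T1 T2 : SearchTree (SPK p q))
    (hT1 : ∀ u v, T1.anc u v ↔ posT1 q α u ≤ posT1 q α v)
    (hT2 : ∀ u v, T2.anc u v ↔ posT2 q β u ≤ posT2 q β v) :
    ((p * (p - 1) / 2 + α * q +
        min (q * (q - 1) / 2 + β) (2 * q * (p - α) - β) : ℕ) : ℕ∞) ≤
      (rotationGraph (SPK p q)).edist T1 T2 := by
  rw [SimpleGraph.edist_eq_sInf]
  refine le_sInf ?_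
  rintro _ ⟨W, rfl⟩
  obtain ⟨S, hS⟩ := SPK.exists_potential_le_length (β := β) W ∅
  rw [SPK.potential_empty_eq_zero hT2, add_zero] at hS
  have hT1S := SPK.le_potential_of_posT1 hT1 hα hβ.le S
  rw [← Nat.choose_two_right, ← Nat.choose_two_right]
  exact Nat.cast_le.mpr (hT1S.trans hS)

/-- Let `T1` be the search tree on `SPK p q` that is the path
`x_1, …, x_α, y_1, …, y_q, x_{α+1}, …, x_p` from the root downward, and `T2` the
path `y_q, …, y_{β+1}, x_p, y_β, …, y_1, x_{p-1}, …, x_1`. Then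
`dist(T1,T2) ≥ C(p,2) + α q + min (C(q,2) + β) (2q(p-α) - β)`. -/
theorem spk_dist_T1_T2_lower (p q α β : ℕ) (hp : 0 < p) (hq : 0 < q)
    (hα : α < p) (hβ : β < q) (T1 T2 : SearchTree (SPK p q))
    (hT1 : ∀ u v, T1.anc u v ↔ posT1 q α u ≤ posT1 q α v)
    (hT2 : ∀ u v, T2.anc u v ↔ posT2 q β u ≤ posT2 q β v) :
    ((p * (p - 1) / 2 + α * q +
        min (q * (q - 1) / 2 + β) (2 * q * (p - α) - β) : ℕ) : ℕ∞) ≤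
      (rotationGraph (SPK p q)).edist T1 T2 :=
  spk_dist_T1_T2_lower_general p q α β hα hβ T1 T2 hT1 hT2
end
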